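/- arXiv:2202.11875 — 6 statements merged into one kernel-verified Lean document; each statement's English description precedes it below -/
import Mathlib

section
/- Let D_n^m be the dumbbell graph formed by joining two complete graphs K_n by a path P_m sharing its endpoint vertices with a vertex of each complete graph, so |V| = 2n + m − 2. Then λ₂(D_n^m) ≤ 12/(6(m−1)(n−1) + m(m−1)) for m ≥ 2. -/
open Matrix SimpleGraph

/-- The eigenvalues of a Hermitian matrix, sorted in nondecreasing order. -/
noncomputable def sortedEigs {N : ℕ} (A : Matrix (Fin N) (Fin N) ℝ) (hA : A.IsHermitian) :
    Fin N → ℝ :=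
  hA.eigenvalues ∘ Tuple.sort hA.eigenvalues

/-- The eigenvalues of the Laplacian matrix of a simple graph on `Fin N`,
sorted in nondecreasing order. -/
noncomputable def sortedLapEigs {N : ℕ} (G : SimpleGraph (Fin N)) : Fin N → ℝ :=
  letI := Classical.decRel G.Adj
  sortedEigs (G.lapMatrix ℝ) (G.posSemidef_lapMatrix ℝ).1

/-- The second smallest eigenvalue of the Laplacian of a simple graph on `Fin N`
(defined to be `0` if `N ≤ 1`). -/
noncomputable def lambda2 {N : ℕ} (G : SimpleGraph (Fin N)) : ℝ :=
  if h : 1 < N then sortedLapEigs G ⟨1, h⟩ else 0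

/-- The dumbbell graph `D_n^m` on `2n + m - 2` vertices (0-indexed): vertices `0, …, n-1`
form a complete graph `K_n`, vertices `n-1, n, …, n+m-2` form a path `P_m`, and vertices
`n+m-2, …, 2n+m-3` form a complete graph `K_n`. -/
def dumbbell (n m : ℕ) : SimpleGraph (Fin (2 * n + m - 2)) :=
  SimpleGraph.fromRel (fun i j =>
    (i.val < n ∧ j.val < n) ∨
    (n + m - 2 ≤ i.val ∧ n + m - 2 ≤ j.val) ∨
    (n - 1 ≤ i.val ∧ i.val + 1 = j.val ∧ j.val ≤ n + m - 2))

section Aux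

open scoped InnerProductSpace
open Finset

/-- Courant–Fischer type upper bound: if `A` is PSD with `A v = 0`, `v ≠ 0`, and `w ⟂ v`,
then the second smallest eigenvalue of `A` is at most the Rayleigh quotient of `w`. -/
lemma dumbbell_key_lemma {N : ℕ} (hN : 1 < N) (A : Matrix (Fin N) (Fin N) ℝ) (hA : A.IsHermitian)
    (hPSD : A.PosSemidef) (v w : Fin N → ℝ) (hv : A *ᵥ v = 0) (hv0 : v ≠ 0) (hw0 : w ≠ 0)
    (hvw : v ⬝ᵥ w = 0) :
    sortedEigs A hA ⟨1, hN⟩ ≤ (w ⬝ᵥ (A *ᵥ w)) / (w ⬝ᵥ w) := by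
  classical
  set b := hA.eigenvectorBasis with hb
  set μ := hA.eigenvalues with hμ
  set σ := Tuple.sort μ with hσ
  have hmono : Monotone (μ ∘ σ) := Tuple.monotone_sort μ
  set E : (Fin N → ℝ) → EuclideanSpace ℝ (Fin N) := fun x => (WithLp.equiv 2 (Fin N → ℝ)).symm x with hE
  set F : EuclideanSpace ℝ (Fin N) → (Fin N → ℝ) := fun u => WithLp.equiv 2 (Fin N → ℝ) u with hF
  have hinner : ∀ x y : Fin N → ℝ, ⟪E x, E y⟫_ℝ = x ⬝ᵥ y := by
    intro x y; simp [hE, PiLp.inner_apply, dotProduct, RCLike.inner_apply]; exact Finset.sum_congr rfl fun i _ => mul_comm _ _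
  have hinner2 : ∀ (u : EuclideanSpace ℝ (Fin N)) (x : Fin N → ℝ), ⟪u, E x⟫_ℝ = F u ⬝ᵥ x := by
    intro u x; simp [hE, hF, PiLp.inner_apply, dotProduct, RCLike.inner_apply]; exact Finset.sum_congr rfl fun i _ => mul_comm _ _
  have hinner3 : ∀ (u : EuclideanSpace ℝ (Fin N)) (x : Fin N → ℝ), ⟪E x, u⟫_ℝ = F u ⬝ᵥ x := by
    intro u x; rw [real_inner_comm]; exact hinner2 u x
  have hww : (0:ℝ) < w ⬝ᵥ w := by
    rw [← hinner]
    refine lt_of_le_of_ne real_inner_self_nonneg (Ne.symm ?_)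
    intro h
    exact hw0 congr($(inner_self_eq_zero.mp h))
  have hQ : (0:ℝ) ≤ w ⬝ᵥ (A *ᵥ w) := by simpa using hPSD.dotProduct_mulVec_nonneg w
  set lam := μ (σ ⟨1, hN⟩) with hlam
  show lam ≤ _
  rcases le_or_gt lam 0 with hneg | hpos
  · exact hneg.trans (div_nonneg hQ hww.le)
  have hsym : ∀ (x y : Fin N → ℝ), (A *ᵥ x) ⬝ᵥ y = x ⬝ᵥ (A *ᵥ y) := by
    intro x y
    rw [dotProduct_mulVec, ← Matrix.mulVec_transpose]
    have hAT : Aᵀ = A := by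
      have h := hA.eq
      rwa [Matrix.conjTranspose_eq_transpose_of_trivial] at h
    rw [hAT, dotProduct_comm]
  have hbA : ∀ (i : Fin N) (x : Fin N → ℝ), F (b i) ⬝ᵥ (A *ᵥ x) = μ i * (F (b i) ⬝ᵥ x) := by
    intro i x
    rw [← hsym]
    have hbe : A *ᵥ F (b i) = μ i • F (b i) := hA.mulVec_eigenvectorBasis i
    rw [hbe, smul_dotProduct, smul_eq_mul]
  set i₀ := σ ⟨0, by omega⟩ with hi₀
  have hlamle : ∀ i : Fin N, i ≠ i₀ → lam ≤ μ i := by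
    intro i hi
    have h1 : σ.symm i ≠ ⟨0, by omega⟩ := by
      intro h; apply hi; rw [hi₀, ← h]; simp
    have h2 : (⟨1, hN⟩ : Fin N) ≤ σ.symm i := by
      rw [Fin.le_def]
      have h3 := Fin.val_ne_of_ne h1
      simp only [Fin.val_mk] at h3 ⊢
      omega
    have h4 := hmono h2
    simpa using h4
  have hcoeff : ∀ i : Fin N, i ≠ i₀ → F (b i) ⬝ᵥ v = 0 := by
    intro i hi
    have h0 : μ i * (F (b i) ⬝ᵥ v) = 0 := by
      rw [← hbA, hv, dotProduct_zero]
    rcases mul_eq_zero.mp h0 with h | h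
    · exact absurd (hpos.trans_le ((hlamle i hi).trans_eq h)) (lt_irrefl 0)
    · exact h
  have hexp : ∀ x y : Fin N → ℝ, x ⬝ᵥ y = ∑ i, (F (b i) ⬝ᵥ x) * (F (b i) ⬝ᵥ y) := by
    intro x y
    calc x ⬝ᵥ y = ⟪E x, E y⟫_ℝ := (hinner _ _).symm
      _ = ∑ i, ⟪E x, b i⟫_ℝ * ⟪b i, E y⟫_ℝ := (b.sum_inner_mul_inner _ _).symm
      _ = ∑ i, (F (b i) ⬝ᵥ x) * (F (b i) ⬝ᵥ y) := by
          refine Finset.sum_congr rfl fun i _ => ?_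
          rw [hinner3, hinner2]
  have hc0 : F (b i₀) ⬝ᵥ v ≠ 0 := by
    intro h
    apply hv0
    have hvv : v ⬝ᵥ v = 0 := by
      rw [hexp]
      apply Finset.sum_eq_zero
      intro i _
      by_cases hii : i = i₀
      · rw [hii, h, mul_zero]
      · rw [hcoeff i hii, zero_mul]
    rw [← hinner] at hvv
    exact congr($(inner_self_eq_zero.mp hvv))
  have hd0 : F (b i₀) ⬝ᵥ w = 0 := by
    have h := hvw
    rw [hexp] at h
    rw [Finset.sum_eq_single i₀] at h
    · exact (mul_eq_zero.mp h).resolve_left hc0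
    · intro i _ hi; rw [hcoeff i hi, zero_mul]
    · intro hmem; exact absurd (Finset.mem_univ i₀) hmem
  have hmain : lam * (w ⬝ᵥ w) ≤ w ⬝ᵥ (A *ᵥ w) := by
    rw [hexp w (A *ᵥ w), hexp w w, Finset.mul_sum]
    apply Finset.sum_le_sum
    intro i _
    rw [hbA]
    by_cases hii : i = i₀
    · rw [hii, hd0]; simp
    · have hμi : lam ≤ μ i := hlamle i hii
      have hsq : 0 ≤ (F (b i) ⬝ᵥ w) * (F (b i) ⬝ᵥ w) := mul_self_nonneg _
      calc lam * ((F (b i) ⬝ᵥ w) * (F (b i) ⬝ᵥ w))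
          ≤ μ i * ((F (b i) ⬝ᵥ w) * (F (b i) ⬝ᵥ w)) := mul_le_mul_of_nonneg_right hμi hsq
        _ = (F (b i) ⬝ᵥ w) * (μ i * (F (b i) ⬝ᵥ w)) := by ring
  rw [le_div_iff₀ hww]
  exact hmain

/-- The test function for the dumbbell graph. -/
noncomputable def dumbbellF (n m k : ℕ) : ℝ :=
  if k < n then -((m:ℝ)-1)
  else if k ≤ n+m-2 then 2*((k:ℝ) - ((n:ℝ)-1)) - ((m:ℝ)-1)
  else (m:ℝ)-1

lemma sum_range_cast' (M : ℕ) : ∑ j ∈ range M, (j:ℝ) = M*(M-1)/2 := by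
  induction M with
  | zero => simp
  | succ k ih => rw [Finset.sum_range_succ, ih]; push_cast; ring

lemma sum_range_cast_sq' (M : ℕ) : ∑ j ∈ range M, (j:ℝ)^2 = M*(M-1)*(2*M-1)/6 := by
  induction M with
  | zero => simp
  | succ k ih => rw [Finset.sum_range_succ, ih]; push_cast; ring

lemma sum_lin' (M : ℕ) : ∑ j ∈ range M, (2*(j:ℝ) - ((M:ℝ)-1)) = 0 := by
  have h1 := sum_range_cast' M
  calc ∑ j ∈ range M, (2*(j:ℝ) - ((M:ℝ)-1))
      = 2 * (∑ j ∈ range M, (j:ℝ)) - M * ((M:ℝ)-1) := by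
        rw [Finset.sum_sub_distrib, ← Finset.mul_sum, Finset.sum_const, Finset.card_range]
        push_cast; ring
    _ = 0 := by rw [h1]; ring

lemma sum_lin_sq' (M : ℕ) :
    ∑ j ∈ range M, (2*(j:ℝ) - ((M:ℝ)-1))^2 = M*((M:ℝ)-1)*((M:ℝ)+1)/3 := by
  have h1 := sum_range_cast' M
  have h2 := sum_range_cast_sq' M
  calc ∑ j ∈ range M, (2*(j:ℝ) - ((M:ℝ)-1))^2
      = ∑ j ∈ range M, (4*(j:ℝ)^2 - 4*((M:ℝ)-1)*(j:ℝ) + ((M:ℝ)-1)^2) := by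
        refine Finset.sum_congr rfl fun j _ => by ring
    _ = 4*(∑ j ∈ range M, (j:ℝ)^2) - 4*((M:ℝ)-1)*(∑ j ∈ range M, (j:ℝ)) + M*((M:ℝ)-1)^2 := by
        rw [Finset.sum_add_distrib, Finset.sum_sub_distrib, ← Finset.mul_sum, ← Finset.mul_sum,
          Finset.sum_const, Finset.card_range]
        ring
    _ = _ := by rw [h1, h2]; ring

end Aux

/-- Upper bound for the second Laplacian eigenvalue of the dumbbell graph:
`λ₂(D_n^m) ≤ 12 / (6(m-1)(n-1) + m(m-1))`. -/
theorem dumbbell_lambda2_upper (n m : ℕ) (hn : 2 ≤ n) (hm : 2 ≤ m) :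
    lambda2 (dumbbell n m) ≤
      12 / (6 * ((m : ℝ) - 1) * ((n : ℝ) - 1) + (m : ℝ) * ((m : ℝ) - 1)) := by
  classical
  have hN : 1 < 2 * n + m - 2 := by omega
  set N := 2 * n + m - 2 with hNdef
  set G := dumbbell n m with hG
  letI : DecidableRel G.Adj := Classical.decRel _
  -- facts about the test function
  have hval1 : ∀ k : ℕ, k < n → dumbbellF n m k = -((m:ℝ)-1) := by
    intro k hk; rw [dumbbellF, if_pos hk]
  have hval2 : ∀ k : ℕ, n + m - 2 ≤ k → dumbbellF n m k = (m:ℝ)-1 := by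
    intro k hk
    rw [dumbbellF, if_neg (by omega)]
    by_cases h : k ≤ n + m - 2
    · rw [if_pos h]
      have hk' : k = n + m - 2 := by omega
      have hc : (k:ℝ) = (n:ℝ) + (m:ℝ) - 2 := by
        rw [hk']; push_cast [Nat.cast_sub (by omega : 2 ≤ n + m)]; ring
      rw [hc]; ring
    · rw [if_neg h]
  have hval3 : ∀ k : ℕ, n - 1 ≤ k → k ≤ n + m - 2 →
      dumbbellF n m k = 2*((k:ℝ) - ((n:ℝ)-1)) - ((m:ℝ)-1) := by
    intro k hk1 hk2
    rw [dumbbellF]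
    by_cases h : k < n
    · rw [if_pos h]
      have hk' : k = n - 1 := by omega
      have hc : (k:ℝ) = (n:ℝ) - 1 := by
        rw [hk']; push_cast [Nat.cast_sub (by omega : 1 ≤ n)]; ring
      rw [hc]; ring
    · rw [if_neg h, if_pos hk2]
  have hstep : ∀ k : ℕ, n - 1 ≤ k → k + 1 ≤ n + m - 2 →
      dumbbellF n m (k+1) - dumbbellF n m k = 2 := by
    intro k hk1 hk2
    rw [hval3 k hk1 (by omega), hval3 (k+1) (by omega) hk2]
    push_cast; ring
  -- the test vector
  set w : Fin N → ℝ := fun i => dumbbellF n m i.val with hw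
  set v : Fin N → ℝ := fun _ => 1 with hv
  -- sum splitting
  have hsplit : ∀ g : ℕ → ℝ, ∑ k ∈ Finset.range N, g k =
      (∑ k ∈ Finset.Ico 0 (n-1), g k) + (∑ k ∈ Finset.Ico (n-1) (n+m-1), g k) +
      (∑ k ∈ Finset.Ico (n+m-1) N, g k) := by
    intro g
    rw [Finset.range_eq_Ico,
      ← Finset.sum_Ico_consecutive g (by omega : 0 ≤ n-1) (by omega : n-1 ≤ N),
      ← Finset.sum_Ico_consecutive g (by omega : n-1 ≤ n+m-1) (by omega : n+m-1 ≤ N), add_assoc]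
  have hmid : ∀ g : ℕ → ℝ, ∑ k ∈ Finset.Ico (n-1) (n+m-1), g k =
      ∑ j ∈ Finset.range m, g (n-1+j) := by
    intro g
    rw [Finset.sum_Ico_eq_sum_range, show n+m-1-(n-1) = m from by omega]
  have hcast1 : ((n-1 : ℕ):ℝ) = (n:ℝ) - 1 := by
    push_cast [Nat.cast_sub (by omega : 1 ≤ n)]; ring
  have hmidval : ∀ j : ℕ, j < m → dumbbellF n m (n-1+j) = 2*(j:ℝ) - ((m:ℝ)-1) := by
    intro j hj
    rw [hval3 (n-1+j) (by omega) (by omega)]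
    have : ((n-1+j : ℕ):ℝ) = (n:ℝ) - 1 + j := by
      push_cast [Nat.cast_sub (by omega : 1 ≤ n)]; ring
    rw [this]; ring
  -- orthogonality
  have hvw : v ⬝ᵥ w = 0 := by
    have : v ⬝ᵥ w = ∑ k ∈ Finset.range N, dumbbellF n m k := by
      rw [dotProduct]
      simp only [hv, hw, one_mul]
      exact Fin.sum_univ_eq_sum_range (fun k => dumbbellF n m k) N
    rw [this, hsplit]
    have h1 : ∑ k ∈ Finset.Ico 0 (n-1), dumbbellF n m k = ((n:ℝ)-1) * (-((m:ℝ)-1)) := by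
      rw [Finset.sum_congr rfl (fun k hk => hval1 k (by
        simp only [Finset.mem_Ico] at hk; omega))]
      rw [Finset.sum_const, Nat.card_Ico, nsmul_eq_mul]
      rw [show n - 1 - 0 = n - 1 by omega, hcast1]
    have h2 : ∑ k ∈ Finset.Ico (n-1) (n+m-1), dumbbellF n m k = 0 := by
      rw [hmid]
      rw [Finset.sum_congr rfl (fun j hj => hmidval j (Finset.mem_range.mp hj))]
      exact sum_lin' m
    have h3 : ∑ k ∈ Finset.Ico (n+m-1) N, dumbbellF n m k = ((n:ℝ)-1) * ((m:ℝ)-1) := by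
      rw [Finset.sum_congr rfl (fun k hk => hval2 k (by
        simp only [Finset.mem_Ico] at hk; omega))]
      rw [Finset.sum_const, Nat.card_Ico, nsmul_eq_mul]
      rw [show N - (n+m-1) = n - 1 by omega, hcast1]
    rw [h1, h2, h3]; ring
  -- norm
  have hS : w ⬝ᵥ w = 2*((n:ℝ)-1)*((m:ℝ)-1)^2 + (m:ℝ)*((m:ℝ)-1)*((m:ℝ)+1)/3 := by
    have : w ⬝ᵥ w = ∑ k ∈ Finset.range N, dumbbellF n m k * dumbbellF n m k := by
      rw [dotProduct]
      exact Fin.sum_univ_eq_sum_range (fun k => dumbbellF n m k * dumbbellF n m k) N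
    rw [this, hsplit]
    have h1 : ∑ k ∈ Finset.Ico 0 (n-1), dumbbellF n m k * dumbbellF n m k
        = ((n:ℝ)-1) * ((m:ℝ)-1)^2 := by
      rw [Finset.sum_congr rfl (fun k hk => by
        rw [hval1 k (by simp only [Finset.mem_Ico] at hk; omega)])]
      rw [Finset.sum_const, Nat.card_Ico, nsmul_eq_mul]
      rw [show n - 1 - 0 = n - 1 by omega, hcast1]; ring
    have h2 : ∑ k ∈ Finset.Ico (n-1) (n+m-1), dumbbellF n m k * dumbbellF n m k
        = (m:ℝ)*((m:ℝ)-1)*((m:ℝ)+1)/3 := by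
      rw [hmid]
      rw [Finset.sum_congr rfl (fun j hj => by
        rw [hmidval j (Finset.mem_range.mp hj), ← sq])]
      exact sum_lin_sq' m
    have h3 : ∑ k ∈ Finset.Ico (n+m-1) N, dumbbellF n m k * dumbbellF n m k
        = ((n:ℝ)-1) * ((m:ℝ)-1)^2 := by
      rw [Finset.sum_congr rfl (fun k hk => by
        rw [hval2 k (by simp only [Finset.mem_Ico] at hk; omega)])]
      rw [Finset.sum_const, Nat.card_Ico, nsmul_eq_mul]
      rw [show N - (n+m-1) = n - 1 by omega, hcast1]; ring
    rw [h1, h2, h3]; ring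
  -- quadratic form
  have hm1 : (2:ℝ) ≤ (m:ℝ) := by exact_mod_cast hm
  have hn1 : (2:ℝ) ≤ (n:ℝ) := by exact_mod_cast hn
  have hQ : w ⬝ᵥ (G.lapMatrix ℝ *ᵥ w) = 4 * ((m:ℝ)-1) := by
    have hform := G.lapMatrix_toLinearMap₂' ℝ w
    rw [← Matrix.toLinearMap₂'_apply', hform]
    -- pointwise identity
    have hpt : ∀ i j : Fin N, (if G.Adj i j then (w i - w j)^2 else 0)
        = (if (i.val+1 = j.val ∧ n-1 ≤ i.val ∧ j.val ≤ n+m-2) then (4:ℝ) else 0)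
        + (if (j.val+1 = i.val ∧ n-1 ≤ j.val ∧ i.val ≤ n+m-2) then (4:ℝ) else 0) := by
      intro i j
      by_cases hp1 : i.val+1 = j.val ∧ n-1 ≤ i.val ∧ j.val ≤ n+m-2
      · obtain ⟨ha, hb, hc⟩ := hp1
        have hp2 : ¬(j.val+1 = i.val ∧ n-1 ≤ j.val ∧ i.val ≤ n+m-2) := by omega
        have hp1' : i.val+1 = j.val ∧ n-1 ≤ i.val ∧ j.val ≤ n+m-2 := ⟨ha, hb, hc⟩
        rw [if_pos hp1', if_neg hp2, add_zero]
        have hadj : G.Adj i j := by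
          rw [hG, dumbbell, SimpleGraph.fromRel_adj]
          beta_reduce
          exact ⟨Fin.ne_of_val_ne (by omega), Or.inl (Or.inr (Or.inr ⟨hb, ha, hc⟩))⟩
        rw [if_pos hadj]
        have h2 := hstep i.val hb (by omega)
        have hwij : w i - w j = -2 := by
          simp only [hw]
          rw [show (j:ℕ) = i.val + 1 from ha.symm]
          linarith
        rw [hwij]; norm_num
      · by_cases hp2 : j.val+1 = i.val ∧ n-1 ≤ j.val ∧ i.val ≤ n+m-2
        · obtain ⟨ha, hb, hc⟩ := hp2
          have hp2' : j.val+1 = i.val ∧ n-1 ≤ j.val ∧ i.val ≤ n+m-2 := ⟨ha, hb, hc⟩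
          rw [if_neg hp1, if_pos hp2', zero_add]
          have hadj : G.Adj i j := by
            rw [hG, dumbbell, SimpleGraph.fromRel_adj]
            beta_reduce
            exact ⟨Fin.ne_of_val_ne (by omega), Or.inr (Or.inr (Or.inr ⟨hb, ha, hc⟩))⟩
          rw [if_pos hadj]
          have h2 := hstep j.val hb (by omega)
          have hwij : w i - w j = 2 := by
            simp only [hw]
            rw [show (i:ℕ) = j.val + 1 from ha.symm]
            linarith
          rw [hwij]; norm_num
        · rw [if_neg hp1, if_neg hp2, add_zero]
          by_cases hadj : G.Adj i j
          · rw [if_pos hadj]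
            rw [hG, dumbbell, SimpleGraph.fromRel_adj] at hadj
            obtain ⟨hne, hr⟩ := hadj
            have heq : w i = w j := by
              rcases hr with (⟨h1, h2⟩ | ⟨h1, h2⟩ | ⟨h1, h2, h3⟩) | (⟨h1, h2⟩ | ⟨h1, h2⟩ | ⟨h1, h2, h3⟩)
              · simp only [hw]; rw [hval1 _ h1, hval1 _ h2]
              · simp only [hw]; rw [hval2 _ h1, hval2 _ h2]
              · exact absurd ⟨h2, h1, h3⟩ hp1
              · simp only [hw]; rw [hval1 _ h2, hval1 _ h1]
              · simp only [hw]; rw [hval2 _ h2, hval2 _ h1]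
              · exact absurd ⟨h2, h1, h3⟩ hp2
            rw [heq]; ring
          · rw [if_neg hadj]
    -- sum it up
    rw [Finset.sum_congr rfl (fun i _ => Finset.sum_congr rfl (fun j _ => hpt i j))]
    simp_rw [Finset.sum_add_distrib]
    -- inner sums collapse
    have hin : ∀ i : Fin N,
        (∑ j : Fin N, if (i.val+1 = j.val ∧ n-1 ≤ i.val ∧ j.val ≤ n+m-2) then (4:ℝ) else 0)
        = if (n-1 ≤ i.val ∧ i.val+1 ≤ n+m-2) then (4:ℝ) else 0 := by
      intro i
      by_cases hc : n-1 ≤ i.val ∧ i.val+1 ≤ n+m-2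
      · rw [if_pos hc]
        have hlt : i.val + 1 < N := by omega
        rw [Finset.sum_eq_single (⟨i.val+1, hlt⟩ : Fin N)]
        · have hcc : i.val+1 = ((⟨i.val+1, hlt⟩ : Fin N)).val ∧ n-1 ≤ i.val ∧ ((⟨i.val+1, hlt⟩ : Fin N)).val ≤ n+m-2 := ⟨rfl, hc.1, by simpa using hc.2⟩
          rw [if_pos hcc]
        · intro j _ hj
          rw [if_neg]
          intro hcon
          exact hj (Fin.ext hcon.1.symm)
        · intro hmem; exact absurd (Finset.mem_univ _) hmem
      · rw [if_neg hc]
        apply Finset.sum_eq_zero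
        intro j _
        rw [if_neg]
        intro hcon
        exact hc ⟨hcon.2.1, by omega⟩
    have hin2 : ∀ j : Fin N,
        (∑ i : Fin N, if (j.val+1 = i.val ∧ n-1 ≤ j.val ∧ i.val ≤ n+m-2) then (4:ℝ) else 0)
        = if (n-1 ≤ j.val ∧ j.val+1 ≤ n+m-2) then (4:ℝ) else 0 := by
      intro j
      by_cases hc : n-1 ≤ j.val ∧ j.val+1 ≤ n+m-2
      · rw [if_pos hc]
        have hlt : j.val + 1 < N := by omega
        rw [Finset.sum_eq_single (⟨j.val+1, hlt⟩ : Fin N)]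
        · have hcc : j.val+1 = ((⟨j.val+1, hlt⟩ : Fin N)).val ∧ n-1 ≤ j.val ∧ ((⟨j.val+1, hlt⟩ : Fin N)).val ≤ n+m-2 := ⟨rfl, hc.1, by simpa using hc.2⟩
          rw [if_pos hcc]
        · intro i _ hi
          rw [if_neg]
          intro hcon
          exact hi (Fin.ext hcon.1.symm)
        · intro hmem; exact absurd (Finset.mem_univ _) hmem
      · rw [if_neg hc]
        apply Finset.sum_eq_zero
        intro i _
        rw [if_neg]
        intro hcon
        exact hc ⟨hcon.2.1, by omega⟩
    have hcount : (∑ i : Fin N, if (n-1 ≤ i.val ∧ i.val+1 ≤ n+m-2) then (4:ℝ) else 0)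
        = 4 * ((m:ℝ)-1) := by
      rw [Fin.sum_univ_eq_sum_range (fun k => if (n-1 ≤ k ∧ k+1 ≤ n+m-2) then (4:ℝ) else 0) N]
      rw [Finset.sum_ite, Finset.sum_const_zero, add_zero, Finset.sum_const]
      have hfilter : Finset.filter (fun k => n-1 ≤ k ∧ k+1 ≤ n+m-2) (Finset.range N)
          = Finset.Ico (n-1) (n+m-2) := by
        ext k
        simp only [Finset.mem_filter, Finset.mem_range, Finset.mem_Ico]
        omega
      rw [hfilter, Nat.card_Ico, nsmul_eq_mul]
      rw [show n+m-2-(n-1) = m - 1 by omega]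
      rw [show ((m-1:ℕ):ℝ) = (m:ℝ)-1 by push_cast [Nat.cast_sub (by omega : 1 ≤ m)]; ring]
      ring
    have e1 : (∑ i : Fin N, ∑ j : Fin N,
        if (i.val+1 = j.val ∧ n-1 ≤ i.val ∧ j.val ≤ n+m-2) then (4:ℝ) else 0) = 4*((m:ℝ)-1) := by
      rw [Finset.sum_congr rfl (fun i _ => hin i)]
      exact hcount
    have e2 : (∑ i : Fin N, ∑ j : Fin N,
        if (j.val+1 = i.val ∧ n-1 ≤ j.val ∧ i.val ≤ n+m-2) then (4:ℝ) else 0) = 4*((m:ℝ)-1) := by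
      rw [Finset.sum_comm]
      rw [Finset.sum_congr rfl (fun j _ => hin2 j)]
      exact hcount
    rw [e1, e2]
    ring
  -- apply the key lemma
  have hv0 : v ≠ 0 := by
    intro h
    have := congrFun h ⟨0, by omega⟩
    simp [hv] at this
  have hw0 : w ≠ 0 := by
    intro h
    have h0 := congrFun h ⟨0, by omega⟩
    simp only [hw, Pi.zero_apply] at h0
    rw [hval1 0 (by omega)] at h0
    linarith
  have hvmul : G.lapMatrix ℝ *ᵥ v = 0 := by
    rw [hv]; exact G.lapMatrix_mulVec_const_eq_zero
  have hkey := dumbbell_key_lemma hN (G.lapMatrix ℝ) (G.posSemidef_lapMatrix ℝ).1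
    (G.posSemidef_lapMatrix ℝ) v w hvmul hv0 hw0 hvw
  have hgoal : lambda2 G ≤ (w ⬝ᵥ (G.lapMatrix ℝ *ᵥ w)) / (w ⬝ᵥ w) := by
    rw [lambda2, dif_pos hN]
    exact hkey
  refine hgoal.trans ?_
  rw [hQ, hS]
  have hSpos : (0:ℝ) < 2*((n:ℝ)-1)*((m:ℝ)-1)^2 + (m:ℝ)*((m:ℝ)-1)*((m:ℝ)+1)/3 := by
    nlinarith
  have hDpos : (0:ℝ) < 6 * ((m:ℝ)-1) * ((n:ℝ)-1) + (m:ℝ) * ((m:ℝ)-1) := by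
    nlinarith
  rw [div_le_div_iff₀ hSpos hDpos]
  nlinarith [mul_nonneg (mul_nonneg (by linarith : (0:ℝ) ≤ (m:ℝ)-1) (by linarith : (0:ℝ) ≤ (m:ℝ)-1)) (by linarith : (0:ℝ) ≤ (n:ℝ)-1)]
end

section
/- Let D_n^m be the dumbbell graph formed by joining two complete graphs K_n by a path P_m (|V| = 2n + m − 2). Then λ₂(D_n^m) ≥ 2/((2n+m−3)(m+1)). -/
open Matrix SimpleGraph

lemma lambda2_ge {N : ℕ} (G : SimpleGraph (Fin N)) (hN : 1 < N) (t : ℝ)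
    (h : ∀ x : Fin N → ℝ, (∑ i, x i) = 0 →
      t * (∑ i, x i ^ 2) ≤ x ⬝ᵥ ((letI := Classical.decRel G.Adj; G.lapMatrix ℝ) *ᵥ x)) :
    t ≤ lambda2 G := by
  letI := Classical.decRel G.Adj
  rw [lambda2, dif_pos hN]
  by_contra hc
  push_neg at hc
  set hA := (G.posSemidef_lapMatrix ℝ).1 with hAdef
  set L := G.lapMatrix ℝ with hLdef
  set σ := Tuple.sort hA.eigenvalues with hσ
  set i : Fin N := σ ⟨0, Nat.lt_of_lt_of_le Nat.zero_lt_one hN.le⟩ with hi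
  set j : Fin N := σ ⟨1, hN⟩ with hj
  have hij : i ≠ j := by
    apply σ.injective.ne
    simp [Fin.ext_iff]
  have hμj : hA.eigenvalues j < t := hc
  have hμi : hA.eigenvalues i < t := by
    refine lt_of_le_of_lt ?_ hμj
    have := Tuple.monotone_sort hA.eigenvalues
      (a := ⟨0, Nat.lt_of_lt_of_le Nat.zero_lt_one hN.le⟩) (b := ⟨1, hN⟩) (by simp [Fin.le_def])
    exact this
  set v : Fin N → ℝ := ⇑(hA.eigenvectorBasis i) with hv
  set w : Fin N → ℝ := ⇑(hA.eigenvectorBasis j) with hw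
  have horth := hA.eigenvectorBasis.orthonormal
  rw [orthonormal_iff_ite] at horth
  have hinner : ∀ p q : Fin N, (∑ k, (hA.eigenvectorBasis p) k * (hA.eigenvectorBasis q) k)
      = if p = q then 1 else 0 := by
    intro p q
    have := horth p q
    rw [PiLp.inner_apply] at this
    simpa [RCLike.inner_apply, mul_comm] using this
  have hvv : ∑ k, v k * v k = 1 := by simpa using hinner i i
  have hww : ∑ k, w k * w k = 1 := by simpa using hinner j j
  have hvw : ∑ k, v k * w k = 0 := by simpa [hij] using hinner i j
  have hwv : ∑ k, w k * v k = 0 := by simpa [hij.symm] using hinner j i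
  set Sv := ∑ k, v k with hSv
  set Sw := ∑ k, w k with hSw
  obtain ⟨a, b, hab0, habS⟩ : ∃ a b : ℝ, a ^ 2 + b ^ 2 ≠ 0 ∧ a * Sv + b * Sw = 0 := by
    by_cases h0 : Sv = 0 ∧ Sw = 0
    · exact ⟨1, 0, by norm_num, by simp [h0.1, h0.2]⟩
    · refine ⟨Sw, -Sv, ?_, by ring⟩
      intro hz
      have ha : Sw = 0 := by nlinarith [sq_nonneg Sw, sq_nonneg Sv]
      have hb : Sv = 0 := by nlinarith [sq_nonneg Sw, sq_nonneg Sv]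
      exact h0 ⟨hb, ha⟩
  set y : Fin N → ℝ := fun k => a * v k + b * w k with hy
  have hysum : (∑ k, y k) = 0 := by
    simp only [hy, Finset.sum_add_distrib, ← Finset.mul_sum]
    exact habS
  have hLy : L *ᵥ y = fun k => a * (hA.eigenvalues i * v k) + b * (hA.eigenvalues j * w k) := by
    have : y = a • v + b • w := by funext k; simp [hy]
    rw [this, mulVec_add, mulVec_smul, mulVec_smul]
    have h1 : L *ᵥ v = hA.eigenvalues i • v := hA.mulVec_eigenvectorBasis i
    have h2 : L *ᵥ w = hA.eigenvalues j • w := hA.mulVec_eigenvectorBasis j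
    rw [h1, h2]
    funext k
    simp [mul_assoc]
  have hquad : y ⬝ᵥ (L *ᵥ y) = a ^ 2 * hA.eigenvalues i + b ^ 2 * hA.eigenvalues j := by
    rw [hLy, dotProduct]
    have expand : ∀ k, y k * (a * (hA.eigenvalues i * v k) + b * (hA.eigenvalues j * w k))
        = a ^ 2 * hA.eigenvalues i * (v k * v k) + a * b * hA.eigenvalues j * (v k * w k)
          + a * b * hA.eigenvalues i * (w k * v k) + b ^ 2 * hA.eigenvalues j * (w k * w k) := by
      intro k; simp only [hy]; ring
    simp_rw [expand]
    rw [Finset.sum_add_distrib, Finset.sum_add_distrib, Finset.sum_add_distrib,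
      ← Finset.mul_sum, ← Finset.mul_sum, ← Finset.mul_sum, ← Finset.mul_sum,
      hvv, hww, hvw, hwv]
    ring
  have hnorm : (∑ k, y k ^ 2) = a ^ 2 + b ^ 2 := by
    have expand : ∀ k, y k ^ 2 = a ^ 2 * (v k * v k) + a * b * (v k * w k)
        + a * b * (w k * v k) + b ^ 2 * (w k * w k) := by
      intro k; simp only [hy]; ring
    simp_rw [expand]
    rw [Finset.sum_add_distrib, Finset.sum_add_distrib, Finset.sum_add_distrib,
      ← Finset.mul_sum, ← Finset.mul_sum, ← Finset.mul_sum, ← Finset.mul_sum,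
      hvv, hww, hvw, hwv]
    ring
  have hmain := h y hysum
  rw [hquad, hnorm] at hmain
  have hab : 0 < a ^ 2 + b ^ 2 := lt_of_le_of_ne (by positivity) (Ne.symm hab0)
  have hcase : 0 < a ^ 2 ∨ 0 < b ^ 2 := by
    by_contra hcc
    push_neg at hcc
    nlinarith [sq_nonneg a, sq_nonneg b]
  rcases hcase with ha2 | hb2
  · nlinarith [mul_nonneg (sub_pos.2 hμj).le (sq_nonneg b), mul_pos (sub_pos.2 hμi) ha2]
  · nlinarith [mul_nonneg (sub_pos.2 hμi).le (sq_nonneg a), mul_pos (sub_pos.2 hμj) hb2]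


lemma chain_bound {N : ℕ} (G : SimpleGraph (Fin N)) [DecidableRel G.Adj] (x : Fin N → ℝ)
    (ℓ : ℕ) (w : ℕ → Fin N)
    (hstep : ∀ k, k < ℓ → G.Adj (w k) (w (k+1)) ∧ (w k).val < (w (k+1)).val) :
    2 * (x (w 0) - x (w ℓ)) ^ 2 ≤
      (ℓ : ℝ) * ∑ i, ∑ j, if G.Adj i j then (x i - x j) ^ 2 else 0 := by
  set Q : ℝ := ∑ i, ∑ j, if G.Adj i j then (x i - x j) ^ 2 else 0 with hQ
  -- monotonicity of vals along the chain
  have hmono : ∀ k k', k < k' → k' ≤ ℓ → (w k).val < (w k').val := by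
    intro k k' hkk' hk'
    induction k' with
    | zero => omega
    | succ k'' ih =>
      rcases Nat.lt_or_ge k k'' with h | h
      · exact lt_trans (ih h (by omega)) (hstep k'' (by omega)).2
      · have : k = k'' := by omega
        subst this
        exact (hstep k (by omega)).2
  -- telescoping + Cauchy-Schwarz
  have htel : x (w 0) - x (w ℓ) = ∑ k ∈ Finset.range ℓ, (x (w k) - x (w (k+1))) :=
    (Finset.sum_range_sub' (fun k => x (w k)) ℓ).symm
  have hcs : (x (w 0) - x (w ℓ)) ^ 2 ≤
      (ℓ : ℝ) * ∑ k ∈ Finset.range ℓ, (x (w k) - x (w (k+1))) ^ 2 := by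
    rw [htel]
    have := sq_sum_le_card_mul_sum_sq (s := Finset.range ℓ)
      (f := fun k => x (w k) - x (w (k+1)))
    simpa using this
  -- bound the path sum by the edge sum
  set F : Fin N × Fin N → ℝ := fun p => if G.Adj p.1 p.2 then (x p.1 - x p.2) ^ 2 else 0 with hF
  have hF0 : ∀ p, 0 ≤ F p := by intro p; simp only [hF]; positivity
  have hQF : Q = ∑ p : Fin N × Fin N, F p := by
    rw [hQ, ← Finset.sum_product']
    rfl
  set e : ℕ × Bool → Fin N × Fin N := fun p => if p.2 then (w p.1, w (p.1+1)) else (w (p.1+1), w p.1)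
    with he
  have hinj : Set.InjOn e ((Finset.range ℓ) ×ˢ (Finset.univ : Finset Bool)) := by
    intro p hp q hq hpq
    simp only [Finset.coe_product, Set.mem_prod, Finset.coe_range, Set.mem_Iio] at hp hq
    have hp1 := hp.1; have hq1 := hq.1
    simp only [he] at hpq
    have hwp := hmono p.1 (p.1+1) (by omega) (by omega)
    have hwq := hmono q.1 (q.1+1) (by omega) (by omega)
    have hbool : p.2 = q.2 := by
      rcases Bool.dichotomy p.2 with h1 | h1 <;> rcases Bool.dichotomy q.2 with h2 | h2 <;>
        simp [h1, h2] at hpq ⊢ <;>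
      · obtain ⟨ha, hb⟩ := hpq
        rw [ha] at hwp; rw [hb] at hwp; omega
    rw [hbool] at hpq
    have hfst : w p.1 = w q.1 := by
      rcases Bool.dichotomy q.2 with h2 | h2 <;> simp [h2] at hpq <;> tauto
    have : p.1 = q.1 := by
      by_contra hne
      rcases Nat.lt_or_ge p.1 q.1 with h | h
      · have := hmono p.1 q.1 h (by omega); rw [hfst] at this; omega
      · have := hmono q.1 p.1 (by omega) (by omega); rw [hfst] at this; omega
    exact Prod.ext this hbool
  have hsum2 : ∑ k ∈ Finset.range ℓ, 2 * (x (w k) - x (w (k+1))) ^ 2 ≤ Q := by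
    have hval : ∀ k ∈ Finset.range ℓ,
        2 * (x (w k) - x (w (k+1))) ^ 2 = ∑ c : Bool, F (e (k, c)) := by
      intro k hk
      rw [Finset.mem_range] at hk
      have hadj := (hstep k hk).1
      rw [Fintype.sum_bool]
      simp only [he, hF, if_true, if_false, Bool.false_eq_true]
      rw [if_pos hadj, if_pos hadj.symm]
      ring
    rw [Finset.sum_congr rfl hval, ← Finset.sum_product', hQF]
    rw [← Finset.sum_image (f := F) (g := e) (by
      intro p hp q hq hpq
      exact hinj (by simpa using hp) (by simpa using hq) hpq)]
    exact Finset.sum_le_sum_of_subset_of_nonneg (Finset.subset_univ _) (fun p _ _ => hF0 p)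
  calc 2 * (x (w 0) - x (w ℓ)) ^ 2 ≤ (ℓ:ℝ) * ∑ k ∈ Finset.range ℓ, 2*(x (w k) - x (w (k+1))) ^ 2 := by
        rw [Finset.mul_sum] at hcs ⊢
        calc 2 * (x (w 0) - x (w ℓ)) ^ 2 ≤ 2 * ∑ k ∈ Finset.range ℓ, (ℓ:ℝ) * (x (w k) - x (w (k+1))) ^ 2 := by
              rw [← Finset.mul_sum] at hcs ⊢; nlinarith [hcs]
          _ = ∑ k ∈ Finset.range ℓ, (ℓ:ℝ) * (2*(x (w k) - x (w (k+1))) ^ 2) := by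
              rw [Finset.mul_sum]; congr 1; funext k; ring
          _ = _ := by rw [← Finset.mul_sum, Finset.mul_sum]
    _ ≤ (ℓ:ℝ) * Q := by
        apply mul_le_mul_of_nonneg_left hsum2 (by positivity)

lemma path_exists (n m : ℕ) (hn : 2 ≤ n) (hm : 2 ≤ m) (u v : Fin (2 * n + m - 2))
    (huv : u.val < v.val) :
    ∃ ℓ : ℕ, ℓ ≤ m + 1 ∧ ∃ w : ℕ → Fin (2 * n + m - 2), w 0 = u ∧ w ℓ = v ∧
      ∀ k, k < ℓ → (dumbbell n m).Adj (w k) (w (k+1)) ∧ (w k).val < (w (k+1)).val := by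
  have hv := v.isLt
  have hadj_of : ∀ a b : Fin (2 * n + m - 2), a.val < b.val →
      ((a.val < n ∧ b.val < n) ∨ (n + m - 2 ≤ a.val ∧ n + m - 2 ≤ b.val) ∨
        (n - 1 ≤ a.val ∧ a.val + 1 = b.val ∧ b.val ≤ n + m - 2)) →
      (dumbbell n m).Adj a b := by
    intro a b hab hr
    rw [dumbbell, SimpleGraph.fromRel_adj]
    exact ⟨Fin.ne_of_val_ne (by omega), Or.inl hr⟩
  by_cases hc1 : v.val < n
  · -- both in left clique
    refine ⟨1, by omega, fun k => if k = 0 then u else v, by simp, by simp, ?_⟩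
    intro k hk
    have : k = 0 := by omega
    subst this
    simp only [if_pos rfl, if_neg one_ne_zero]
    exact ⟨hadj_of u v huv (Or.inl ⟨by omega, hc1⟩), huv⟩
  · by_cases hc2 : n + m - 2 ≤ u.val
    · -- both in right clique
      refine ⟨1, by omega, fun k => if k = 0 then u else v, by simp, by simp, ?_⟩
      intro k hk
      have : k = 0 := by omega
      subst this
      simp only [if_pos rfl, if_neg one_ne_zero]
      exact ⟨hadj_of u v huv (Or.inr (Or.inl ⟨hc2, by omega⟩)), huv⟩
    · -- general case through the middle path
      push_neg at hc1 hc2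
      set s : ℕ := max u.val (n - 1) with hs
      set e : ℕ := min v.val (n + m - 2) with he
      set p : ℕ := if u.val < n - 1 then 1 else 0 with hp
      set q : ℕ := if n + m - 2 < v.val then 1 else 0 with hq
      set L : ℕ := p + (e - s) + q with hL
      set f : ℕ → ℕ := fun k => if k = 0 then u.val else
        if k ≤ p + (e - s) then s + (k - p) else v.val with hf
      have hes : s < e := by simp only [hs, he, hp] at *; omega
      have hfN : ∀ k, f k < 2 * n + m - 2 := by
        intro k
        simp only [hf, hs, he, hp]
        split_ifs <;> omega
      refine ⟨L, ?_, fun k => ⟨f k, hfN k⟩, ?_, ?_, ?_⟩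
      · simp only [hL, hp, hq, hs, he]; split_ifs <;> omega
      · apply Fin.ext; simp [hf]
      · apply Fin.ext
        show f L = v.val
        simp only [hf, hL, hp, hq, hs, he] at *
        split_ifs at * <;> omega
      · intro k hk
        have hstep : ((f k < n ∧ f (k+1) < n) ∨
            (n + m - 2 ≤ f k ∧ n + m - 2 ≤ f (k+1)) ∨
            (n - 1 ≤ f k ∧ f k + 1 = f (k+1) ∧ f (k+1) ≤ n + m - 2)) ∧ f k < f (k+1) := by
          simp only [hf, hL, hp, hq, hs, he] at *
          split_ifs at * <;> omega
        exact ⟨hadj_of _ _ hstep.2 hstep.1, hstep.2⟩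

lemma dumbbell_quad (n m : ℕ) (hn : 2 ≤ n) (hm : 2 ≤ m) (x : Fin (2 * n + m - 2) → ℝ)
    (hx : (∑ i, x i) = 0) :
    2 / ((2 * (n : ℝ) + (m : ℝ) - 3) * ((m : ℝ) + 1)) * (∑ i, x i ^ 2) ≤
      x ⬝ᵥ ((letI := Classical.decRel (dumbbell n m).Adj; (dumbbell n m).lapMatrix ℝ) *ᵥ x) := by
  letI := Classical.decRel (dumbbell n m).Adj
  have hNcast : ((2 * n + m - 2 : ℕ) : ℝ) = 2 * (n:ℝ) + (m:ℝ) - 3 + 1 := by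
    push_cast [Nat.cast_sub (by omega : 2 ≤ 2 * n + m)]; ring
  set Q : ℝ := ∑ i, ∑ j, if (dumbbell n m).Adj i j then (x i - x j) ^ 2 else 0 with hQ
  have hQ0 : 0 ≤ Q := by
    rw [hQ]; apply Finset.sum_nonneg; intro i _; apply Finset.sum_nonneg; intro j _
    split <;> positivity
  have hLQ : x ⬝ᵥ ((dumbbell n m).lapMatrix ℝ *ᵥ x) = Q / 2 := by
    rw [← Matrix.toLinearMap₂'_apply', lapMatrix_toLinearMap₂']
  -- per-pair bound
  have hpair : ∀ u v : Fin (2 * n + m - 2), 2 * (x u - x v) ^ 2 ≤ ((m:ℝ) + 1) * Q := by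
    have main : ∀ u v : Fin (2 * n + m - 2), u.val < v.val →
        2 * (x u - x v) ^ 2 ≤ ((m:ℝ) + 1) * Q := by
      intro u v huv
      obtain ⟨ℓ, hℓ, w, hw0, hwℓ, hstep⟩ := path_exists n m hn hm u v huv
      have hcb := chain_bound (dumbbell n m) x ℓ w hstep
      rw [hw0, hwℓ] at hcb
      refine hcb.trans ?_
      have hcast : (ℓ:ℝ) ≤ (m:ℝ) + 1 := by exact_mod_cast hℓ
      exact mul_le_mul_of_nonneg_right hcast hQ0
    intro u v
    rcases lt_trichotomy u.val v.val with h | h | h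
    · exact main u v h
    · have : u = v := Fin.ext h
      subst this
      simp only [sub_self]
      have : (0:ℝ) ≤ ((m:ℝ) + 1) * Q := by positivity
      simpa using this
    · have h2 := main v u h
      have hsq : (x u - x v) ^ 2 = (x v - x u) ^ 2 := by ring
      rw [hsq]; exact h2
  -- sum of all pairwise square differences
  have hS : ∑ u : Fin (2 * n + m - 2), ∑ v : Fin (2 * n + m - 2), (x u - x v) ^ 2 =
      2 * ((2 * n + m - 2 : ℕ) : ℝ) * ∑ i, x i ^ 2 := by
    have hrow : ∀ u : Fin (2 * n + m - 2), (∑ v, (x u - x v) ^ 2) =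
        ((2 * n + m - 2 : ℕ):ℝ) * x u ^ 2 + ∑ v, x v ^ 2 := by
      intro u
      have hterm : ∀ v : Fin (2 * n + m - 2), (x u - x v) ^ 2 =
          x u ^ 2 - 2 * x u * x v + x v ^ 2 := fun v => by ring
      simp_rw [hterm]
      rw [Finset.sum_add_distrib, Finset.sum_sub_distrib, Finset.sum_const, ← Finset.mul_sum, hx,
        Finset.card_univ, Fintype.card_fin, nsmul_eq_mul]
      ring
    simp_rw [hrow]
    rw [Finset.sum_add_distrib, Finset.sum_const, ← Finset.mul_sum, Finset.card_univ,
      Fintype.card_fin, nsmul_eq_mul]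
    ring
  -- restrict to off-diagonal pairs
  have hoff : ∑ u : Fin (2 * n + m - 2), ∑ v : Fin (2 * n + m - 2), (x u - x v) ^ 2 =
      ∑ p ∈ (Finset.univ : Finset (Fin (2 * n + m - 2))).offDiag, (x p.1 - x p.2) ^ 2 := by
    rw [← Finset.sum_product']
    refine (Finset.sum_subset (fun p hp => by
      rw [Finset.mem_offDiag] at hp
      exact Finset.mem_product.2 ⟨hp.1, hp.2.1⟩) ?_).symm
    intro p hp hnp
    have : p.1 = p.2 := by
      by_contra hne
      exact hnp (Finset.mem_offDiag.2 ⟨Finset.mem_univ _, Finset.mem_univ _, hne⟩)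
    rw [this, sub_self]
    norm_num
  have hcard : ((Finset.univ : Finset (Fin (2 * n + m - 2))).offDiag).card =
      (2 * n + m - 2) * (2 * n + m - 2) - (2 * n + m - 2) := by
    rw [Finset.offDiag_card, Finset.card_univ, Fintype.card_fin]
  have hkey : 2 * (2 * ((2 * n + m - 2 : ℕ):ℝ) * ∑ i, x i ^ 2) ≤
      (((2 * n + m - 2 : ℕ):ℝ) * ((2 * n + m - 2 : ℕ):ℝ) - ((2 * n + m - 2 : ℕ):ℝ)) *
        (((m:ℝ) + 1) * Q) := by
    have h1 : ∑ p ∈ (Finset.univ : Finset (Fin (2 * n + m - 2))).offDiag,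
          2 * (x p.1 - x p.2) ^ 2 ≤
        ∑ _p ∈ (Finset.univ : Finset (Fin (2 * n + m - 2))).offDiag, ((m:ℝ) + 1) * Q :=
      Finset.sum_le_sum fun p _ => hpair p.1 p.2
    rw [Finset.sum_const, hcard, nsmul_eq_mul] at h1
    rw [← Finset.mul_sum, ← hoff, hS] at h1
    refine h1.trans_eq ?_
    congr 1
    have hle : (2 * n + m - 2) ≤ (2 * n + m - 2) * (2 * n + m - 2) :=
      Nat.le_mul_of_pos_left _ (by omega)
    push_cast [Nat.cast_sub hle]
    ring
  -- final arithmetic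
  rw [hLQ]
  have hX0 : (0:ℝ) ≤ ∑ i, x i ^ 2 := by positivity
  have hNpos : (0:ℝ) < ((2 * n + m - 2 : ℕ):ℝ) := by
    have : 0 < 2 * n + m - 2 := by omega
    exact_mod_cast this
  have hcpos : (0:ℝ) < 2 * (n:ℝ) + (m:ℝ) - 3 := by
    have h1 : (2:ℝ) ≤ (n:ℝ) := by exact_mod_cast hn
    have h2 : (2:ℝ) ≤ (m:ℝ) := by exact_mod_cast hm
    linarith
  have hdpos : (0:ℝ) < (m:ℝ) + 1 := by positivity
  have h4 : 4 * (∑ i, x i ^ 2) ≤ (2 * (n:ℝ) + (m:ℝ) - 3) * ((m:ℝ) + 1) * Q := by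
    have hkey' : ((2 * n + m - 2 : ℕ):ℝ) * (4 * (∑ i, x i ^ 2)) ≤
        ((2 * n + m - 2 : ℕ):ℝ) * ((2 * (n:ℝ) + (m:ℝ) - 3) * ((m:ℝ) + 1) * Q) := by
      rw [hNcast] at hkey ⊢
      nlinarith [hkey]
    exact le_of_mul_le_mul_left hkey' hNpos
  rw [div_mul_eq_mul_div, div_le_div_iff₀ (by positivity) (by norm_num)]
  nlinarith [h4]

/-- Lower bound for the second Laplacian eigenvalue of the dumbbell graph:
`λ₂(D_n^m) ≥ 2 / ((2n+m-3)(m+1))`. -/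
theorem dumbbell_lambda2_lower (n m : ℕ) (hn : 2 ≤ n) (hm : 2 ≤ m) :
    2 / ((2 * (n : ℝ) + (m : ℝ) - 3) * ((m : ℝ) + 1)) ≤ lambda2 (dumbbell n m) := by
  have hN : 1 < 2 * n + m - 2 := by omega
  exact lambda2_ge (dumbbell n m) hN _ (dumbbell_quad n m hn hm)
end

section
/- Let S_n^m be the graph formed by joining two star graphs S_n (each a center with n−1 leaves) by a path P_m whose endpoints are identified with one vertex of each star (|V| = 2n+m−2). Then λ₂(S_n^m) ≥ 2/((2n+m−3)(m+3)). -/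
open Matrix SimpleGraph

/-- The `t`-th vertex (as an element of `ℕ`, `0 ≤ t ≤ m-1`) of the connecting path `P_m`:
it starts at vertex `v₁` of the first block (vertices `0..n-1`), runs through the interior
vertices `n, n+1, …, n+m-3`, and ends at vertex `n+m-2+v₂` of the second block
(vertices `n+m-2 .. 2n+m-3`). -/
def pathVert (n m : ℕ) (v₁ v₂ : Fin n) (t : ℕ) : ℕ :=
  if t = 0 then v₁.val else if t = m - 1 then n + m - 2 + v₂.val else n + t - 1

/-- The star bridge graph `S_n^m` on `2n+m-2` vertices: a star with center `c₁` on vertices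
`0..n-1`, a star with center `n+m-2+c₂` on vertices `n+m-2..2n+m-3`, joined by a path `P_m`
from vertex `v₁` of the first star to vertex `n+m-2+v₂` of the second star. -/
def starBridge (n m : ℕ) (c₁ v₁ c₂ v₂ : Fin n) : SimpleGraph (Fin (2 * n + m - 2)) :=
  SimpleGraph.fromRel (fun i j =>
    (i.val = c₁.val ∧ j.val < n) ∨
    (i.val = n + m - 2 + c₂.val ∧ n + m - 2 ≤ j.val) ∨
    (∃ t, t + 1 < m ∧ i.val = pathVert n m v₁ v₂ t ∧ j.val = pathVert n m v₁ v₂ (t + 1)))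

section Aux
open RealInnerProductSpace

variable {V : Type*}

lemma sortedEigs_one_ge {N : ℕ} (A : Matrix (Fin N) (Fin N) ℝ) (hA : A.IsHermitian)
    (hN : 1 < N) (c : ℝ)
    (h : ∀ x : Fin N → ℝ, (∑ i, x i) = 0 → c * (∑ i, (x i)^2) ≤ x ⬝ᵥ (A *ᵥ x)) :
    c ≤ sortedEigs A hA ⟨1, hN⟩ := by
  classical
  set σ := Tuple.sort hA.eigenvalues with hσ
  have h0N : 0 < N := by omega
  set i0 : Fin N := σ ⟨0, h0N⟩ with hi0
  set i1 : Fin N := σ ⟨1, hN⟩ with hi1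
  set w : Fin N → ℝ := ⇑(hA.eigenvectorBasis i0) with hw
  set v : Fin N → ℝ := ⇑(hA.eigenvectorBasis i1) with hv
  have hne : i0 ≠ i1 := by
    simp only [hi0, hi1]
    intro hcon
    have := σ.injective hcon
    simp [Fin.ext_iff] at this
  have horth : (∑ i, w i * v i) = 0 := by
    have := hA.eigenvectorBasis.orthonormal.2 hne
    simpa [PiLp.inner_apply, w, v, mul_comm] using this
  have hnw : (∑ i, w i * w i) = 1 := by
    have h2 : (inner ℝ (hA.eigenvectorBasis i0) (hA.eigenvectorBasis i0) : ℝ) = 1 := by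
      rw [real_inner_self_eq_norm_sq, hA.eigenvectorBasis.orthonormal.1 i0]; norm_num
    rw [PiLp.inner_apply] at h2; simpa [w, sq] using h2
  have hnv : (∑ i, v i * v i) = 1 := by
    have h2 : (inner ℝ (hA.eigenvectorBasis i1) (hA.eigenvectorBasis i1) : ℝ) = 1 := by
      rw [real_inner_self_eq_norm_sq, hA.eigenvectorBasis.orthonormal.1 i1]; norm_num
    rw [PiLp.inner_apply] at h2; simpa [v, sq] using h2
  set l0 : ℝ := hA.eigenvalues i0 with hl0
  set l1 : ℝ := hA.eigenvalues i1 with hl1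
  have hAw : A *ᵥ w = l0 • w := hA.mulVec_eigenvectorBasis i0
  have hAv : A *ᵥ v = l1 • v := hA.mulVec_eigenvectorBasis i1
  have hle : l0 ≤ l1 := by
    have := Tuple.monotone_sort hA.eigenvalues
      (a := ⟨0, h0N⟩) (b := ⟨1, hN⟩) (by simp [Fin.le_def])
    simpa [Function.comp, hi0, hi1, hl0, hl1] using this
  have hgoal : sortedEigs A hA ⟨1, hN⟩ = l1 := rfl
  rw [hgoal]
  set sw : ℝ := ∑ i, w i with hsw
  set sv : ℝ := ∑ i, v i with hsv
  by_cases hswz : sw = 0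
  · -- use x := w
    have hkey := h w (by rw [← hsw]; exact hswz)
    have hQw : w ⬝ᵥ (A *ᵥ w) = l0 := by
      rw [hAw, dotProduct_smul]
      simp only [smul_eq_mul, dotProduct, hnw, mul_one]
    have h2 : (∑ i, (w i)^2) = 1 := by simpa [sq] using hnw
    rw [hQw, h2, mul_one] at hkey
    linarith
  · set x : Fin N → ℝ := fun i => sv * w i - sw * v i with hx
    have hsum : (∑ i, x i) = 0 := by
      simp [hx, Finset.sum_sub_distrib, ← Finset.mul_sum, ← hsw, ← hsv]; ring
    have hx2 : (∑ i, (x i)^2) = sv^2 + sw^2 := by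
      have : ∀ i, (x i)^2 = sv^2 * (w i * w i) - 2*sv*sw*(w i * v i) + sw^2 * (v i * v i) := by
        intro i; simp [hx]; ring
      simp only [this, Finset.sum_add_distrib, Finset.sum_sub_distrib, ← Finset.mul_sum,
        hnw, hnv, horth]
      ring
    have hAx : A *ᵥ x = fun i => sv * l0 * w i - sw * l1 * v i := by
      have : x = sv • w - sw • v := by funext i; simp [hx]
      rw [this, mulVec_sub, mulVec_smul, mulVec_smul, hAw, hAv]
      funext i; simp; ring
    have hQ : x ⬝ᵥ (A *ᵥ x) = sv^2 * l0 + sw^2 * l1 := by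
      rw [hAx]
      simp only [dotProduct, hx]
      have : ∀ i, (sv * w i - sw * v i) * (sv * l0 * w i - sw * l1 * v i)
          = sv^2*l0*(w i * w i) + sw^2*l1*(v i * v i)
            - (sv*sw*l1 + sw*sv*l0) * (w i * v i) := by
        intro i; ring
      simp only [this, Finset.sum_add_distrib, Finset.sum_sub_distrib, ← Finset.mul_sum,
        hnw, hnv, horth]
      ring
    have hkey := h x hsum
    rw [hx2, hQ] at hkey
    have hpos : 0 < sv^2 + sw^2 := by positivity
    nlinarith [sq_nonneg sv, sq_nonneg sw]


/-- squared difference as a function on unordered pairs -/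
noncomputable def dsq (x : V → ℝ) : Sym2 V → ℝ :=
  Sym2.lift ⟨fun i j => (x i - x j)^2, by intros; ring⟩

lemma dsq_mk (x : V → ℝ) (i j : V) : dsq x s(i, j) = (x i - x j)^2 := rfl

lemma dsq_nonneg (x : V → ℝ) (e : Sym2 V) : 0 ≤ dsq x e := by
  induction e with
  | _ i j => rw [dsq_mk]; positivity

lemma aux_sq (a b L S : ℝ) (hL : 0 ≤ L) (hS : 0 ≤ S) (hb : b^2 ≤ L * S) :
    (a + b)^2 ≤ (L + 1) * (a^2 + S) := by
  rcases eq_or_lt_of_le hL with h | h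
  · have : b = 0 := by nlinarith
    subst this; nlinarith
  · have h1 : 0 ≤ (L*a - b)^2 := sq_nonneg _
    have h2 : 0 ≤ (L+1) * (L*S - b^2) := by nlinarith
    have : 0 ≤ L * ((L+1)*(a^2+S) - (a+b)^2) := by nlinarith
    nlinarith

lemma walk_sq_le (G : SimpleGraph V) (x : V → ℝ) {u v : V} (w : G.Walk u v) :
    (x u - x v)^2 ≤ (w.length : ℝ) * (w.edges.map (dsq x)).sum := by
  induction w with
  | nil => simp
  | @cons a b c h p ih =>
      have hS : 0 ≤ (p.edges.map (dsq x)).sum := by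
        apply List.sum_nonneg
        intro y hy
        obtain ⟨e, _, rfl⟩ := List.mem_map.mp hy
        exact dsq_nonneg x e
      have key := aux_sq (x a - x b) (x b - x c) (p.length : ℝ)
        ((p.edges.map (dsq x)).sum) (by positivity) hS ih
      calc (x a - x c)^2 = ((x a - x b) + (x b - x c))^2 := by ring_nf
        _ ≤ ((p.length : ℝ) + 1) * ((x a - x b)^2 + (p.edges.map (dsq x)).sum) := key
        _ = ((SimpleGraph.Walk.cons h p).length : ℝ) *
              (((SimpleGraph.Walk.cons h p).edges.map (dsq x)).sum) := by
            simp only [SimpleGraph.Walk.length_cons, SimpleGraph.Walk.edges_cons,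
              List.map_cons, List.sum_cons, dsq_mk]
            push_cast
            ring

lemma trail_sum_le [Fintype V] [DecidableEq V] (G : SimpleGraph V) [DecidableRel G.Adj]
    (x : V → ℝ) {u v : V} (w : G.Walk u v) (hnd : w.edges.Nodup) :
    (w.edges.map (dsq x)).sum ≤ ∑ e ∈ G.edgeFinset, dsq x e := by
  rw [← List.sum_toFinset _ hnd]
  apply Finset.sum_le_sum_of_subset_of_nonneg
  · intro e he
    rw [List.mem_toFinset] at he
    rw [SimpleGraph.mem_edgeFinset]
    exact w.edges_subset_edgeSet he
  · intro e _ _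
    exact dsq_nonneg x e

lemma double_sum_adj [Fintype V] [DecidableEq V] (G : SimpleGraph V) [DecidableRel G.Adj]
    (f : Sym2 V → ℝ) :
    ∑ i, ∑ j, (if G.Adj i j then f s(i, j) else 0) = 2 * ∑ e ∈ G.edgeFinset, f e := by
  have h1 : ∑ i, ∑ j, (if G.Adj i j then f s(i, j) else 0)
      = ∑ d : G.Dart, f d.edge := by
    rw [← Finset.sum_product', ← Finset.sum_filter]
    refine (Finset.sum_bij (fun (d : G.Dart) _ => d.toProd) ?_ ?_ ?_ ?_).symm
    · intro d _
      simp [Finset.mem_filter, d.adj]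
    · intro d1 _ d2 _ h
      exact SimpleGraph.Dart.toProd_injective h
    · intro p hp
      rw [Finset.mem_filter] at hp
      exact ⟨⟨p, hp.2⟩, Finset.mem_univ _, rfl⟩
    · intro d _
      rfl
  rw [h1, ← Finset.sum_fiberwise_of_maps_to
    (g := SimpleGraph.Dart.edge) (t := G.edgeFinset)
    (fun d _ => SimpleGraph.mem_edgeFinset.2 d.edge_mem), Finset.mul_sum]
  refine Finset.sum_congr rfl fun e he => ?_
  have hcard := G.dart_edge_fiber_card e (SimpleGraph.mem_edgeFinset.1 he)
  rw [Finset.sum_congr rfl (fun d hd => by rw [(Finset.mem_filter.1 hd).2] :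
    ∀ d ∈ Finset.univ.filter (fun d : G.Dart => d.edge = e), f d.edge = f e)]
  rw [Finset.sum_const, hcard]
  simp [mul_comm]

lemma pair_sq_le [Fintype V] [DecidableEq V] (G : SimpleGraph V) [DecidableRel G.Adj]
    (x : V → ℝ) {u v : V} (k : ℕ) (w : G.Walk u v) (hw : w.length ≤ k) :
    (x u - x v)^2 ≤ (k : ℝ) * ∑ e ∈ G.edgeFinset, dsq x e := by
  set p := w.bypass with hp'
  have hp : p.IsPath := w.bypass_isPath
  have hlen : p.length ≤ k := le_trans w.length_bypass_le hw
  have h1 := walk_sq_le G x p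
  have h2 := trail_sum_le G x p hp.isTrail.edges_nodup
  have hS : 0 ≤ (p.edges.map (dsq x)).sum := by
    apply List.sum_nonneg
    intro y hy
    obtain ⟨e, _, rfl⟩ := List.mem_map.mp hy
    exact dsq_nonneg x e
  have hk' : (p.length : ℝ) ≤ (k : ℝ) := by exact_mod_cast hlen
  calc (x u - x v)^2 ≤ (p.length : ℝ) * (p.edges.map (dsq x)).sum := h1
    _ ≤ (k : ℝ) * (p.edges.map (dsq x)).sum := by
        apply mul_le_mul_of_nonneg_right hk' hS
    _ ≤ (k : ℝ) * ∑ e ∈ G.edgeFinset, dsq x e := by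
        apply mul_le_mul_of_nonneg_left h2 (by positivity)

lemma quad_lower {N k : ℕ} (G : SimpleGraph (Fin N)) [DecidableRel G.Adj]
    (hN : 1 < N) (hk : 0 < k)
    (hwalk : ∀ u v : Fin N, ∃ w : G.Walk u v, w.length ≤ k)
    (x : Fin N → ℝ) (hx : ∑ i, x i = 0) :
    2 / (((N : ℝ) - 1) * (k : ℝ)) * (∑ i, (x i)^2) ≤ x ⬝ᵥ (G.lapMatrix ℝ *ᵥ x) := by
  set E := ∑ e ∈ G.edgeFinset, dsq x e with hE'
  have hEnn : 0 ≤ E := Finset.sum_nonneg fun e _ => dsq_nonneg x e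
  have hE : x ⬝ᵥ (G.lapMatrix ℝ *ᵥ x) = E := by
    rw [← Matrix.toLinearMap₂'_apply', SimpleGraph.lapMatrix_toLinearMap₂']
    have hd := double_sum_adj G (dsq x)
    simp only [dsq_mk] at hd
    rw [hd]; ring
  have key : ∀ u v : Fin N, (x u - x v)^2 ≤ if u = v then 0 else (k : ℝ) * E := by
    intro u v
    by_cases h : u = v
    · simp [h]
    · rw [if_neg h]
      obtain ⟨w, hw⟩ := hwalk u v
      exact pair_sq_le G x k w hw
  have hsum : ∑ u, ∑ v, (x u - x v)^2 ≤ ∑ u : Fin N, ∑ v : Fin N,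
      (if u = v then 0 else (k : ℝ) * E) := by
    apply Finset.sum_le_sum; intro u _
    apply Finset.sum_le_sum; intro v _
    exact key u v
  have hrhs : ∑ u : Fin N, ∑ v : Fin N, (if u = v then 0 else (k : ℝ) * E)
      = (N : ℝ) * ((N : ℝ) - 1) * ((k : ℝ) * E) := by
    have hinner : ∀ u : Fin N, ∑ v : Fin N, (if u = v then 0 else (k : ℝ) * E)
        = (N : ℝ) * ((k : ℝ) * E) - (k : ℝ) * E := by
      intro u
      have : ∀ v : Fin N, (if u = v then 0 else (k : ℝ) * E)
          = (k : ℝ) * E - (if u = v then (k : ℝ) * E else 0) := by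
        intro v; by_cases h : u = v <;> simp [h]
      simp only [this, Finset.sum_sub_distrib, Finset.sum_const, Finset.card_univ,
        Fintype.card_fin, Finset.sum_ite_eq, Finset.mem_univ, if_true]
      push_cast; ring
    simp only [hinner, Finset.sum_const, Finset.card_univ, Fintype.card_fin]
    push_cast; ring
  have hlhs : ∑ u, ∑ v, (x u - x v)^2
      = 2 * (N : ℝ) * (∑ i, (x i)^2) - 2 * (∑ i, x i)^2 := by
    simp only [sub_sq]
    simp only [Finset.sum_add_distrib, Finset.sum_sub_distrib, ← Finset.sum_mul,
      ← Finset.mul_sum, Finset.sum_const, Finset.card_univ, Fintype.card_fin, nsmul_eq_mul, sq]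
    push_cast
    have hmm : ∑ i : Fin N, (N : ℝ) * x i * x i = (N : ℝ) * ∑ i : Fin N, x i * x i := by
      rw [Finset.mul_sum]; exact Finset.sum_congr rfl fun i _ => by ring
    rw [hmm]
    ring
  rw [hlhs, hx] at hsum
  rw [hE]
  have hNpos : (0 : ℝ) < N := by positivity
  have hN1 : (1 : ℝ) ≤ (N : ℝ) - 1 := by
    have : (2 : ℝ) ≤ N := by exact_mod_cast hN
    linarith
  have hkpos : (0 : ℝ) < k := by exact_mod_cast hk
  have hpos : (0 : ℝ) < ((N : ℝ) - 1) * (k : ℝ) := by positivity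
  rw [div_mul_eq_mul_div, div_le_iff₀ hpos]
  nlinarith [hsum, hNpos, hEnn]


variable {n m : ℕ} {c₁ v₁ c₂ v₂ : Fin n}

lemma pathVert_lt (hn : 2 ≤ n) (hm : 2 ≤ m) (t : ℕ) (ht : t ≤ m - 1) :
    pathVert n m v₁ v₂ t < 2 * n + m - 2 := by
  have h1 := v₁.isLt
  have h2 := v₂.isLt
  unfold pathVert
  split_ifs <;> omega

/-- the `t`-th path vertex as an element of `Fin (2n+m-2)` -/
def Pv (n m : ℕ) (hn : 2 ≤ n) (hm : 2 ≤ m) (v₁ v₂ : Fin n) (t : ℕ) : Fin (2 * n + m - 2) :=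
  ⟨pathVert n m v₁ v₂ t % (2 * n + m - 2), Nat.mod_lt _ (by omega)⟩

lemma Pv_val (hn : 2 ≤ n) (hm : 2 ≤ m) (t : ℕ) (ht : t ≤ m - 1) :
    (Pv n m hn hm v₁ v₂ t).val = pathVert n m v₁ v₂ t :=
  Nat.mod_eq_of_lt (pathVert_lt hn hm t ht)

/-- center of star 1 -/
def Cv1 (n m : ℕ) (hm : 2 ≤ m) (c₁ : Fin n) : Fin (2 * n + m - 2) :=
  ⟨c₁.val, by have := c₁.isLt; omega⟩

/-- center of star 2 -/
def Cv2 (n m : ℕ) (hm : 2 ≤ m) (c₂ : Fin n) : Fin (2 * n + m - 2) :=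
  ⟨n + m - 2 + c₂.val, by have := c₂.isLt; omega⟩

lemma adj_C1 (hm : 2 ≤ m) (u : Fin (2 * n + m - 2)) (h1 : u.val < n) (h2 : u.val ≠ c₁.val) :
    (starBridge n m c₁ v₁ c₂ v₂).Adj (Cv1 n m hm c₁) u := by
  rw [starBridge, fromRel_adj]
  exact ⟨fun h => h2 (by rw [← h]; rfl), Or.inl (Or.inl ⟨rfl, h1⟩)⟩

lemma adj_C2 (hm : 2 ≤ m) (u : Fin (2 * n + m - 2)) (h1 : n + m - 2 ≤ u.val)
    (h2 : u.val ≠ n + m - 2 + c₂.val) :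
    (starBridge n m c₁ v₁ c₂ v₂).Adj (Cv2 n m hm c₂) u := by
  rw [starBridge, fromRel_adj]
  exact ⟨fun h => h2 (by rw [← h]; rfl), Or.inl (Or.inr (Or.inl ⟨rfl, h1⟩))⟩

lemma pathVert_ne (hn : 2 ≤ n) (hm : 2 ≤ m) (t : ℕ) (ht : t + 1 < m) :
    pathVert n m v₁ v₂ t ≠ pathVert n m v₁ v₂ (t + 1) := by
  have hv1 := v₁.isLt
  have hv2 := v₂.isLt
  unfold pathVert
  split_ifs with h1 h2 h3 h4 h5 h6 h7 h8
  all_goals try omega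
  all_goals exact h2.elim

lemma adj_Pv (hn : 2 ≤ n) (hm : 2 ≤ m) (t : ℕ) (ht : t + 1 < m) :
    (starBridge n m c₁ v₁ c₂ v₂).Adj (Pv n m hn hm v₁ v₂ t) (Pv n m hn hm v₁ v₂ (t + 1)) := by
  have h1 : t ≤ m - 1 := by omega
  have h2 : t + 1 ≤ m - 1 := by omega
  rw [starBridge, fromRel_adj]
  constructor
  · intro hc
    apply pathVert_ne hn hm t ht (v₁ := v₁) (v₂ := v₂)
    rw [← Pv_val hn hm t h1, ← Pv_val hn hm (t+1) h2, hc]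
  · exact Or.inl (Or.inr (Or.inr ⟨t, ht, Pv_val hn hm t h1, Pv_val hn hm (t+1) h2⟩))

lemma walk_Pv (hn : 2 ≤ n) (hm : 2 ≤ m) (d : ℕ) : ∀ (t : ℕ), t + d ≤ m - 1 →
    ∃ w : (starBridge n m c₁ v₁ c₂ v₂).Walk (Pv n m hn hm v₁ v₂ t) (Pv n m hn hm v₁ v₂ (t + d)),
      w.length = d := by
  induction d with
  | zero => exact fun t _ => ⟨Walk.nil, rfl⟩
  | succ d ih =>
      intro t h
      obtain ⟨w, hw⟩ := ih (t + 1) (by omega)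
      refine ⟨(Walk.cons (adj_Pv hn hm t (by omega)) w).copy rfl ?_, ?_⟩
      · rw [show t + 1 + d = t + (d + 1) from by omega]
      · simp [hw]

lemma walk_toC1 (hn : 2 ≤ n) (hm : 2 ≤ m) (u : Fin (2 * n + m - 2)) (h1 : u.val < n) :
    ∃ w : (starBridge n m c₁ v₁ c₂ v₂).Walk u (Cv1 n m hm c₁), w.length ≤ 1 := by
  by_cases h : u = Cv1 n m hm c₁
  · exact ⟨Walk.nil.copy h.symm rfl, by simp⟩
  · exact ⟨Walk.cons (adj_C1 hm u h1 (fun hc => h (Fin.ext hc))).symm Walk.nil, by simp⟩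

lemma walk_toC2 (hn : 2 ≤ n) (hm : 2 ≤ m) (u : Fin (2 * n + m - 2)) (h1 : n + m - 2 ≤ u.val) :
    ∃ w : (starBridge n m c₁ v₁ c₂ v₂).Walk u (Cv2 n m hm c₂), w.length ≤ 1 := by
  by_cases h : u = Cv2 n m hm c₂
  · exact ⟨Walk.nil.copy h.symm rfl, by simp⟩
  · exact ⟨Walk.cons (adj_C2 hm u h1 (fun hc => h (Fin.ext hc))).symm Walk.nil, by simp⟩

lemma pv_zero : pathVert n m v₁ v₂ 0 = v₁.val := rfl

lemma pv_last (hm : 2 ≤ m) : pathVert n m v₁ v₂ (m - 1) = n + m - 2 + v₂.val := by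
  unfold pathVert
  rw [if_neg (by omega), if_pos rfl]

lemma walk_toV1 (hn : 2 ≤ n) (hm : 2 ≤ m) (u : Fin (2 * n + m - 2)) (h1 : u.val < n) :
    ∃ w : (starBridge n m c₁ v₁ c₂ v₂).Walk u (Pv n m hn hm v₁ v₂ 0), w.length ≤ 2 := by
  obtain ⟨w1, hw1⟩ := walk_toC1 (c₁ := c₁) (v₁ := v₁) (c₂ := c₂) (v₂ := v₂) hn hm u h1
  have hv : (Pv n m hn hm v₁ v₂ 0).val < n := by
    rw [Pv_val hn hm 0 (by omega), pv_zero]; exact v₁.isLt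
  by_cases h : Pv n m hn hm v₁ v₂ 0 = Cv1 n m hm c₁
  · exact ⟨w1.copy rfl h.symm, by simp only [Walk.length_copy]; omega⟩
  · refine ⟨w1.append (Walk.cons (adj_C1 hm _ hv (fun hc => h (Fin.ext hc))) Walk.nil), ?_⟩
    simp only [Walk.length_append, Walk.length_cons, Walk.length_nil]
    omega

lemma walk_toV2 (hn : 2 ≤ n) (hm : 2 ≤ m) (u : Fin (2 * n + m - 2)) (h1 : n + m - 2 ≤ u.val) :
    ∃ w : (starBridge n m c₁ v₁ c₂ v₂).Walk u (Pv n m hn hm v₁ v₂ (m - 1)), w.length ≤ 2 := by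
  obtain ⟨w1, hw1⟩ := walk_toC2 (c₁ := c₁) (v₁ := v₁) (c₂ := c₂) (v₂ := v₂) hn hm u h1
  have hv : n + m - 2 ≤ (Pv n m hn hm v₁ v₂ (m - 1)).val := by
    rw [Pv_val hn hm (m - 1) (by omega), pv_last hm]; omega
  by_cases h : Pv n m hn hm v₁ v₂ (m - 1) = Cv2 n m hm c₂
  · exact ⟨w1.copy rfl h.symm, by simp only [Walk.length_copy]; omega⟩
  · refine ⟨w1.append (Walk.cons (adj_C2 hm _ hv (fun hc => h (Fin.ext hc))) Walk.nil), ?_⟩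
    simp only [Walk.length_append, Walk.length_cons, Walk.length_nil]
    omega

lemma mid_eq_Pv (hn : 2 ≤ n) (hm : 2 ≤ m) (u : Fin (2 * n + m - 2)) (h1 : n ≤ u.val)
    (h2 : u.val < n + m - 2) : u = Pv n m hn hm v₁ v₂ (u.val - n + 1) := by
  apply Fin.ext
  rw [Pv_val hn hm _ (by omega)]
  unfold pathVert
  rw [if_neg (by omega), if_neg (by omega)]
  omega

lemma exists_short_walk (hn : 2 ≤ n) (hm : 2 ≤ m) (u v : Fin (2 * n + m - 2)) :
    ∃ w : (starBridge n m c₁ v₁ c₂ v₂).Walk u v, w.length ≤ m + 3 := by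
  have swap : ∀ {a b : Fin (2 * n + m - 2)},
      (∃ w : (starBridge n m c₁ v₁ c₂ v₂).Walk a b, w.length ≤ m + 3) →
      ∃ w : (starBridge n m c₁ v₁ c₂ v₂).Walk b a, w.length ≤ m + 3 := by
    rintro a b ⟨w, hw⟩
    exact ⟨w.reverse, by simpa using hw⟩
  have coreAB : ∀ (a b : Fin (2 * n + m - 2)), a.val < n →
      ∃ w : (starBridge n m c₁ v₁ c₂ v₂).Walk a b, w.length ≤ m + 3 := by
    intro a b ha
    obtain ⟨w1, hw1⟩ := walk_toV1 (c₁ := c₁) (c₂ := c₂) hn hm a ha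
    rcases lt_or_ge b.val n with hb | hb
    · obtain ⟨w2, hw2⟩ := walk_toV1 (c₁ := c₁) (c₂ := c₂) hn hm b hb
      exact ⟨w1.append w2.reverse,
        by simp only [Walk.length_append, Walk.length_reverse]; omega⟩
    rcases lt_or_ge b.val (n + m - 2) with hb2 | hb2
    · obtain ⟨w2, hw2⟩ := walk_Pv (c₁ := c₁) (c₂ := c₂) hn hm (b.val - n + 1) 0 (by omega)
      refine ⟨(w1.append (w2.copy rfl (by rw [zero_add]))).copy rfl
        (mid_eq_Pv hn hm b hb hb2).symm, ?_⟩
      simp only [Walk.length_copy, Walk.length_append, hw2]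
      omega
    · obtain ⟨w2, hw2⟩ := walk_Pv (c₁ := c₁) (c₂ := c₂) hn hm (m - 1) 0 (by omega)
      obtain ⟨w3, hw3⟩ := walk_toV2 (c₁ := c₁) (c₂ := c₂) hn hm b hb2
      refine ⟨(w1.append (w2.copy rfl (by rw [zero_add]))).append w3.reverse, ?_⟩
      simp only [Walk.length_copy, Walk.length_append, Walk.length_reverse, hw2]
      omega
  rcases lt_or_ge u.val n with hu | hu
  · exact coreAB u v hu
  rcases lt_or_ge v.val n with hv | hv
  · exact swap (coreAB v u hv)
  rcases lt_or_ge u.val (n + m - 2) with hu2 | hu2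
  · rcases lt_or_ge v.val (n + m - 2) with hv2 | hv2
    · set t := u.val - n + 1 with htdef
      set s := v.val - n + 1 with hsdef
      rcases le_total t s with hts | hts
      · obtain ⟨w, hw⟩ := walk_Pv (c₁ := c₁) (c₂ := c₂) hn hm (s - t) t (by omega)
        refine ⟨(w.copy (mid_eq_Pv hn hm u hu hu2).symm
          (by rw [show t + (s - t) = s from by omega]; exact (mid_eq_Pv hn hm v hv hv2).symm)), ?_⟩
        simp only [Walk.length_copy, hw]
        omega
      · apply swap
        obtain ⟨w, hw⟩ := walk_Pv (c₁ := c₁) (c₂ := c₂) hn hm (t - s) s (by omega)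
        refine ⟨(w.copy (mid_eq_Pv hn hm v hv hv2).symm
          (by rw [show s + (t - s) = t from by omega]; exact (mid_eq_Pv hn hm u hu hu2).symm)), ?_⟩
        simp only [Walk.length_copy, hw]
        omega
    · set t := u.val - n + 1 with htdef
      obtain ⟨w, hw⟩ := walk_Pv (c₁ := c₁) (c₂ := c₂) hn hm (m - 1 - t) t (by omega)
      obtain ⟨w3, hw3⟩ := walk_toV2 (c₁ := c₁) (c₂ := c₂) hn hm v hv2
      refine ⟨((w.copy (mid_eq_Pv hn hm u hu hu2).symm
        (by rw [show t + (m - 1 - t) = m - 1 from by omega])).append w3.reverse), ?_⟩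
      simp only [Walk.length_copy, Walk.length_append, Walk.length_reverse, hw]
      omega
  · rcases lt_or_ge v.val (n + m - 2) with hv2 | hv2
    · apply swap
      set t := v.val - n + 1 with htdef
      obtain ⟨w, hw⟩ := walk_Pv (c₁ := c₁) (c₂ := c₂) hn hm (m - 1 - t) t (by omega)
      obtain ⟨w3, hw3⟩ := walk_toV2 (c₁ := c₁) (c₂ := c₂) hn hm u hu2
      refine ⟨((w.copy (mid_eq_Pv hn hm v hv hv2).symm
        (by rw [show t + (m - 1 - t) = m - 1 from by omega])).append w3.reverse), ?_⟩
      simp only [Walk.length_copy, Walk.length_append, Walk.length_reverse, hw]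
      omega
    · obtain ⟨w1, hw1⟩ := walk_toV2 (c₁ := c₁) (c₂ := c₂) hn hm u hu2
      obtain ⟨w2, hw2⟩ := walk_toV2 (c₁ := c₁) (c₂ := c₂) hn hm v hv2
      exact ⟨w1.append w2.reverse,
        by simp only [Walk.length_append, Walk.length_reverse]; omega⟩



/-- Lower bound for the second Laplacian eigenvalue of the star bridge graph:
`λ₂(S_n^m) ≥ 2 / ((2n+m-3)(m+3))`. -/
theorem starBridge_lambda2_lower (n m : ℕ) (hn : 2 ≤ n) (hm : 2 ≤ m)
    (c₁ v₁ c₂ v₂ : Fin n) :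
    2 / ((2 * (n : ℝ) + (m : ℝ) - 3) * ((m : ℝ) + 3)) ≤
      lambda2 (starBridge n m c₁ v₁ c₂ v₂) := by
  have hN : 1 < 2 * n + m - 2 := by omega
  set G := starBridge n m c₁ v₁ c₂ v₂ with hG
  letI : DecidableRel G.Adj := Classical.decRel G.Adj
  have hcast : (2 * (n : ℝ) + (m : ℝ) - 3) * ((m : ℝ) + 3)
      = (((2 * n + m - 2 : ℕ) : ℝ) - 1) * ((m + 3 : ℕ) : ℝ) := by
    have hc2 : ((2 * n + m - 2 : ℕ) : ℝ) = 2 * (n : ℝ) + (m : ℝ) - 2 := by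
      rw [Nat.cast_sub (by omega)]
      push_cast
      ring
    rw [hc2]
    push_cast
    ring
  rw [hcast]
  have key := sortedEigs_one_ge (G.lapMatrix ℝ) ((G.posSemidef_lapMatrix ℝ)).1 hN
    (2 / ((((2 * n + m - 2 : ℕ) : ℝ) - 1) * ((m + 3 : ℕ) : ℝ))) ?_
  · unfold lambda2
    rw [dif_pos hN]
    exact key
  · intro x hx
    exact quad_lower G hN (show 0 < m + 3 by omega) (exists_short_walk hn hm) x hx

end Aux
end

section
/- Let S_n^m be the graph formed by joining two star graphs S_n (center plus n−1 leaves) by a path P_m whose endpoints are vertices of the stars. Then λ₂(S_n^m) ≤ (4n+2)/(2n+m−4). -/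
open Matrix SimpleGraph

/-! ### Auxiliary lemmas -/

lemma sum_dp {ι : Type*} {N : ℕ} (s : Finset ι) (f : ι → Fin N → ℝ) (w : Fin N → ℝ) :
    (∑ i ∈ s, f i) ⬝ᵥ w = ∑ i ∈ s, f i ⬝ᵥ w := by
  simp only [dotProduct, Finset.sum_apply, Finset.sum_mul]
  rw [Finset.sum_comm]

lemma dp_sum {ι : Type*} {N : ℕ} (s : Finset ι) (w : Fin N → ℝ) (f : ι → Fin N → ℝ) :
    w ⬝ᵥ (∑ i ∈ s, f i) = ∑ i ∈ s, w ⬝ᵥ f i := by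
  simp only [dotProduct, Finset.sum_apply, Finset.mul_sum]
  rw [Finset.sum_comm]

lemma mv_sum {ι : Type*} {N : ℕ} (s : Finset ι) (A : Matrix (Fin N) (Fin N) ℝ)
    (f : ι → Fin N → ℝ) : A *ᵥ (∑ i ∈ s, f i) = ∑ i ∈ s, A *ᵥ f i := by
  ext k
  simp only [mulVec, dotProduct, Finset.sum_apply, Finset.mul_sum]
  rw [Finset.sum_comm]

lemma spectral_lb {N : ℕ} (A : Matrix (Fin N) (Fin N) ℝ) (hA : A.IsHermitian)
    (hN : 1 < N) (y : Fin N → ℝ)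
    (hy : ⇑(hA.eigenvectorBasis (Tuple.sort hA.eigenvalues ⟨0, by omega⟩)) ⬝ᵥ y = 0) :
    sortedEigs A hA ⟨1, hN⟩ * (y ⬝ᵥ y) ≤ y ⬝ᵥ (A *ᵥ y) := by
  set σ := Tuple.sort hA.eigenvalues with hσ
  set b := hA.eigenvectorBasis with hb
  set lam := hA.eigenvalues with hlam
  set c : Fin N → ℝ := fun j => ⇑(b j) ⬝ᵥ y with hc
  have hortho : ∀ i j : Fin N, ⇑(b i) ⬝ᵥ ⇑(b j) = if i = j then (1:ℝ) else 0 := by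
    intro i j
    have h3 : (inner ℝ (b i) (b j) : ℝ) = ⇑(b i) ⬝ᵥ ⇑(b j) := by
      simp [PiLp.inner_apply, RCLike.inner_apply, dotProduct, mul_comm]
    rw [← h3, orthonormal_iff_ite.mp b.orthonormal]
  have hrepr : (WithLp.toLp 2 y : EuclideanSpace ℝ (Fin N)) = ∑ j, c j • b j := by
    have h1 := b.sum_repr (WithLp.toLp 2 y : EuclideanSpace ℝ (Fin N))
    have h2 : ∀ j, b.repr (WithLp.toLp 2 y : EuclideanSpace ℝ (Fin N)) j = c j := by
      intro j
      rw [b.repr_apply_apply]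
      simp [hc, PiLp.inner_apply, RCLike.inner_apply, dotProduct, mul_comm]
    rw [← h1]
    refine Finset.sum_congr rfl fun j _ => ?_
    rw [h2]
  have hyfun : y = ∑ j, c j • ⇑(b j) := by
    funext k
    have := congrArg (fun v : EuclideanSpace ℝ (Fin N) => v k) hrepr
    simpa using this
  have hyy : y ⬝ᵥ y = ∑ j, (c j)^2 := by
    conv_lhs => rw [hyfun]
    rw [sum_dp]
    refine Finset.sum_congr rfl fun j _ => ?_
    rw [smul_dotProduct, smul_eq_mul, ← hyfun, sq]
  have hAy : y ⬝ᵥ (A *ᵥ y) = ∑ j, lam j * (c j)^2 := by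
    conv_lhs => rw [hyfun]
    rw [mv_sum]
    have hev : ∀ j, A *ᵥ (c j • ⇑(b j)) = c j • (lam j • ⇑(b j)) := fun j => by
      rw [Matrix.mulVec_smul]; exact congrArg _ (hA.mulVec_eigenvectorBasis j)
    refine (congrArg (fun v => (∑ j, c j • ⇑(b j)) ⬝ᵥ v) (Finset.sum_congr rfl fun j _ => hev j)).trans ?_
    rw [sum_dp]
    refine Finset.sum_congr rfl fun j _ => ?_
    rw [smul_dotProduct, dp_sum, Finset.sum_eq_single j]
    · rw [dotProduct_smul, dotProduct_smul, hortho j j, if_pos rfl]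
      simp only [smul_eq_mul, hc]
      ring
    · intro i _ hij
      rw [dotProduct_smul, dotProduct_smul, hortho j i]
      rw [if_neg (Ne.symm hij)]
      simp
    · simp
  have hkey : ∀ j : Fin N, j ≠ σ ⟨0, by omega⟩ → sortedEigs A hA ⟨1, hN⟩ ≤ lam j := by
    intro j hj
    have h1 : σ.symm j ≠ ⟨0, by omega⟩ := fun h => hj (by rw [← h]; simp)
    have h2 : (⟨1, hN⟩ : Fin N) ≤ σ.symm j := by
      have h3 := Fin.val_ne_of_ne h1
      simp only [Fin.le_def, Fin.val_mk] at h3 ⊢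
      omega
    have := Tuple.monotone_sort hA.eigenvalues h2
    have h5 : lam j = hA.eigenvalues (σ (σ.symm j)) := by rw [σ.apply_symm_apply]
    rw [h5]
    exact this
  have hc0 : c (σ ⟨0, by omega⟩) = 0 := hy
  rw [hyy, hAy, Finset.mul_sum]
  refine Finset.sum_le_sum fun j _ => ?_
  by_cases hj : j = σ ⟨0, by omega⟩
  · rw [hj, hc0]; simp
  · have := hkey j hj
    nlinarith [sq_nonneg (c j)]

lemma lambda2_le {N : ℕ} (hN : 1 < N) (G : SimpleGraph (Fin N)) (x : Fin N → ℝ)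
    (hx0 : ∑ i, x i = 0) (hxne : x ≠ 0) (c : ℝ) (hc : 0 ≤ c)
    (hQ : ∀ (_ : DecidableRel G.Adj), x ⬝ᵥ ((G.lapMatrix ℝ) *ᵥ x) ≤ c * (x ⬝ᵥ x)) :
    lambda2 G ≤ c := by
  letI inst := Classical.decRel G.Adj
  set L := G.lapMatrix ℝ with hL
  have hA : L.IsHermitian := (G.posSemidef_lapMatrix ℝ).1
  rw [lambda2, dif_pos hN]
  show sortedEigs L hA ⟨1, hN⟩ ≤ c
  set σ := Tuple.sort hA.eigenvalues with hσ
  set u : Fin N → ℝ := ⇑(hA.eigenvectorBasis (σ ⟨0, by omega⟩)) with hu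
  set ones : Fin N → ℝ := fun _ => 1 with hones
  set p := u ⬝ᵥ ones with hp
  set q := u ⬝ᵥ x with hq'
  have hself : ∀ v : Fin N → ℝ, 0 ≤ v ⬝ᵥ v :=
    fun v => Finset.sum_nonneg (fun i _ => mul_self_nonneg _)
  have honesones : ones ⬝ᵥ ones = (N:ℝ) := by simp [dotProduct, hones]
  have honesx : ones ⬝ᵥ x = 0 := by simpa [dotProduct, hones] using hx0
  have hxones : x ⬝ᵥ ones = 0 := by simpa [dotProduct, hones, mul_comm] using hx0
  have hLones : L *ᵥ ones = 0 := G.lapMatrix_mulVec_const_eq_zero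
  have hsym : ∀ v w : Fin N → ℝ, v ⬝ᵥ (L *ᵥ w) = w ⬝ᵥ (L *ᵥ v) := by
    intro v w
    have hAij : ∀ i j, L i j = L j i := by
      intro i j
      have := congrFun (congrFun hA.eq j) i
      simpa using this
    simp only [dotProduct, mulVec, dotProduct, Finset.mul_sum]
    rw [Finset.sum_comm]
    refine Finset.sum_congr rfl fun i _ => Finset.sum_congr rfl fun j _ => ?_
    rw [hAij j i]; ring
  have main : ∀ α β : ℝ, α * p + β * q = 0 → α • ones + β • x ≠ 0 →
      sortedEigs L hA ⟨1, hN⟩ ≤ c := by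
    intro α β h0 hne
    set y := α • ones + β • x with hy
    have huy : u ⬝ᵥ y = 0 := by
      rw [hy, dotProduct_add, dotProduct_smul, dotProduct_smul, ← hp, ← hq']
      simpa using h0
    have hs := spectral_lb L hA hN y huy
    have hyy : y ⬝ᵥ y = α^2 * N + β^2 * (x ⬝ᵥ x) := by
      rw [hy]
      simp only [dotProduct_add, add_dotProduct, dotProduct_smul, smul_dotProduct,
        honesones, honesx, hxones, smul_eq_mul]
      ring
    have hyLy : y ⬝ᵥ (L *ᵥ y) = β^2 * (x ⬝ᵥ (L *ᵥ x)) := by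
      have h1 : L *ᵥ y = β • (L *ᵥ x) := by
        rw [hy, Matrix.mulVec_add, Matrix.mulVec_smul, Matrix.mulVec_smul, hLones]
        simp
      have h2 : ones ⬝ᵥ (L *ᵥ x) = 0 := by rw [hsym]; simp [hLones]
      rw [h1, dotProduct_smul, hy, add_dotProduct, smul_dotProduct, smul_dotProduct, h2]
      simp only [smul_eq_mul]
      ring
    have hyypos : 0 < y ⬝ᵥ y := by
      rcases lt_or_eq_of_le (hself y) with h | h
      · exact h
      · exact absurd (dotProduct_self_eq_zero.mp h.symm) hne
    have hchain : sortedEigs L hA ⟨1, hN⟩ * (y ⬝ᵥ y) ≤ c * (y ⬝ᵥ y) := by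
      have h3 : x ⬝ᵥ (L *ᵥ x) ≤ c * (x ⬝ᵥ x) := hQ inst
      have h4 : β^2 * (x ⬝ᵥ (L *ᵥ x)) ≤ β^2 * (c * (x ⬝ᵥ x)) :=
        mul_le_mul_of_nonneg_left h3 (sq_nonneg β)
      have h5 : (0:ℝ) ≤ α^2 * N := by positivity
      have h6 := hself x
      calc sortedEigs L hA ⟨1, hN⟩ * (y ⬝ᵥ y) ≤ y ⬝ᵥ (L *ᵥ y) := hs
        _ = β^2 * (x ⬝ᵥ (L *ᵥ x)) := hyLy
        _ ≤ β^2 * (c * (x ⬝ᵥ x)) := h4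
        _ ≤ c * (y ⬝ᵥ y) := by rw [hyy]; nlinarith [sq_nonneg β]
    exact le_of_mul_le_mul_right hchain hyypos
  by_cases hq : q = 0
  · refine main 0 1 (by rw [hq]; ring) ?_
    simpa using hxne
  · refine main q (-p) (by ring) ?_
    intro h
    apply hq
    have h7 : ones ⬝ᵥ (q • ones + (-p) • x) = 0 := by rw [h]; simp
    rw [dotProduct_add, dotProduct_smul, dotProduct_smul, honesones, honesx] at h7
    have hN0 : (0:ℝ) < N := by exact_mod_cast Nat.lt_of_lt_of_le Nat.zero_lt_one hN.le
    simp only [smul_eq_mul, mul_zero, add_zero] at h7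
    rcases mul_eq_zero.mp h7 with h8 | h8
    · exact h8
    · exact absurd h8 (ne_of_gt hN0)

lemma single_val_sum_le {N : ℕ} (b : ℕ) (D : ℝ) (hD : 0 ≤ D) :
    (∑ j : Fin N, if j.val = b then D else 0) ≤ D := by
  by_cases hb : b < N
  · have : (∑ j : Fin N, if j.val = b then D else 0) = D := by
      rw [Finset.sum_eq_single (⟨b, hb⟩ : Fin N)]
      · simp
      · intro j _ hj
        rw [if_neg]
        exact fun h => hj (Fin.ext h)
      · simp
    rw [this]
  · have hz : ∀ j : Fin N, (if j.val = b then D else 0) = 0 := by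
      intro j
      have := j.isLt
      rw [if_neg]
      omega
    rw [Finset.sum_congr rfl (fun j _ => hz j)]
    simpa using hD

lemma double_ite_le {N : ℕ} (a b : ℕ) (D : ℝ) (hD : 0 ≤ D) :
    (∑ i : Fin N, ∑ j : Fin N, if (i.val = a ∧ j.val = b) then D else 0) ≤ D := by
  have inner : ∀ i : Fin N,
      (∑ j : Fin N, if (i.val = a ∧ j.val = b) then D else 0) ≤ (if i.val = a then D else 0) := by
    intro i
    by_cases hia : i.val = a
    · simp only [hia, true_and, if_pos rfl]
      exact single_val_sum_le b D hD
    · simp [hia]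
  calc (∑ i : Fin N, ∑ j : Fin N, if (i.val = a ∧ j.val = b) then D else 0)
      ≤ ∑ i : Fin N, (if i.val = a then D else 0) := Finset.sum_le_sum (fun i _ => inner i)
    _ ≤ D := single_val_sum_le a D hD

set_option maxHeartbeats 2000000 in
/-- Upper bound for the second Laplacian eigenvalue of the star bridge graph:
`λ₂(S_n^m) ≤ (4n+2)/(2n+m-4)`. -/
theorem starBridge_lambda2_upper (n m : ℕ) (hn : 2 ≤ n) (hm : 2 ≤ m)
    (c₁ v₁ c₂ v₂ : Fin n) :
    lambda2 (starBridge n m c₁ v₁ c₂ v₂) ≤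
      (4 * (n : ℝ) + 2) / (2 * (n : ℝ) + (m : ℝ) - 4) := by
  have hv₁ := v₁.isLt
  have hv₂ := v₂.isLt
  have hN : 1 < 2 * n + m - 2 := by omega
  set G := starBridge n m c₁ v₁ c₂ v₂ with hG
  set pv := pathVert n m v₁ v₂ with hpvdef
  set f' : ℕ → ℝ := fun k => if 2*k+1 < 2*n+m-2 then 1 else if 2*k+1 = 2*n+m-2 then 0 else -1
    with hf'
  set h' : ℕ → ℝ := fun t => if 2*t+1 < m then 1 else if 2*t+1 = m then 0 else -1 with hh'
  set f : Fin (2*n+m-2) → ℝ := fun i => f' i.val with hfdef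
  have hfsmall : ∀ k, k < n → f' k = 1 := by
    intro k hk
    simp only [hf']
    rw [if_pos (by omega)]
  have hfbig : ∀ k, n + m - 2 ≤ k → f' k = -1 := by
    intro k hk
    simp only [hf']
    rw [if_neg (by omega), if_neg (by omega)]
  have hpv : ∀ t, t ≤ m - 1 → f' (pv t) = h' t := by
    intro t ht
    simp only [hf', hh', hpvdef, pathVert]
    split_ifs <;> first | (exfalso; omega) | rfl
  have h'0 : h' 0 = 1 := by
    simp only [hh']
    rw [if_pos (by omega)]
  have h'last : h' (m-1) = -1 := by
    simp only [hh']
    rw [if_neg (by omega), if_neg (by omega)]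
  have hstep : ∀ t, (h' t - h' (t+1))^2 ≤ 2*(h' t - h' (t+1)) := by
    intro t
    simp only [hh']
    split_ifs <;> first | (exfalso; omega) | norm_num
  have htel : ∑ t ∈ Finset.range (m-1), (h' t - h' (t+1))^2 ≤ 4 := by
    calc ∑ t ∈ Finset.range (m-1), (h' t - h' (t+1))^2
        ≤ ∑ t ∈ Finset.range (m-1), 2*(h' t - h' (t+1)) :=
          Finset.sum_le_sum (fun t _ => hstep t)
      _ = 2 * ∑ t ∈ Finset.range (m-1), (h' t - h' (t+1)) := by rw [Finset.mul_sum]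
      _ = 2 * (h' 0 - h' (m-1)) := by rw [Finset.sum_range_sub' h']
      _ = 4 := by rw [h'0, h'last]; norm_num
  have hD : ∀ t, (0:ℝ) ≤ (h' t - h' (t+1))^2 := fun t => sq_nonneg _
  -- the test vector sums to zero
  have hrev : ∀ i : Fin (2*n+m-2), f i.rev = - f i := by
    intro i
    have hi := i.isLt
    simp only [hfdef, hf', Fin.val_rev]
    split_ifs <;> first | (exfalso; omega) | norm_num
  have hx0 : ∑ i, f i = 0 := by
    have h1 : ∑ i, f (Fin.revPerm i) = ∑ i, f i := Equiv.sum_comp Fin.revPerm f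
    have h2 : ∑ i, f (Fin.revPerm i) = - ∑ i, f i := by
      rw [← Finset.sum_neg_distrib]
      refine Finset.sum_congr rfl fun i _ => ?_
      simpa using hrev i
    linarith
  have hxne : f ≠ 0 := by
    intro h0
    have h1 : f ⟨0, by omega⟩ = 1 := by
      simp only [hfdef, hf']
      rw [if_pos (by omega)]
    rw [h0] at h1
    simpa using h1
  -- casts
  have hR : ((2*n+m-2 : ℕ) : ℝ) = 2*(n:ℝ)+(m:ℝ)-2 := by
    rw [Nat.cast_sub (by omega)]
    push_cast
    ring
  have hn' : (2:ℝ) ≤ (n:ℝ) := by exact_mod_cast hn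
  have hm' : (2:ℝ) ≤ (m:ℝ) := by exact_mod_cast hm
  have hden : (0:ℝ) < ((2*n+m-2:ℕ):ℝ) - 1 := by rw [hR]; linarith
  have hc : (0:ℝ) ≤ 4 / (((2*n+m-2:ℕ):ℝ) - 1) := le_of_lt (div_pos (by norm_num) hden)
  -- lower bound on the norm of the test vector
  have hsumsq : ((2*n+m-2:ℕ):ℝ) - 1 ≤ ∑ i, (f i)^2 := by
    set mid : Fin (2*n+m-2) := ⟨(2*n+m-3)/2, by omega⟩ with hmid
    have h1 : ∀ i : Fin (2*n+m-2), (1:ℝ) - (if i = mid then 1 else 0) ≤ (f i)^2 := by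
      intro i
      have hi := i.isLt
      by_cases he : 2*i.val+1 = 2*n+m-2
      · have hieq : i = mid := Fin.ext (by simp only [hmid]; omega)
        rw [if_pos hieq]
        have := sq_nonneg (f i)
        linarith
      · have h2 : (f i)^2 = 1 := by
          simp only [hfdef, hf']
          split_ifs <;> first | (exfalso; omega) | norm_num
        rw [h2]
        split_ifs <;> norm_num
    calc ((2*n+m-2:ℕ):ℝ) - 1
        = ∑ i : Fin (2*n+m-2), ((1:ℝ) - (if i = mid then 1 else 0)) := by
          rw [Finset.sum_sub_distrib, Finset.sum_const, Finset.card_univ, Fintype.card_fin,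
            Finset.sum_ite_eq' Finset.univ mid (fun _ => (1:ℝ))]
          simp
      _ ≤ ∑ i, (f i)^2 := Finset.sum_le_sum (fun i _ => h1 i)
  -- pointwise bound on edge contributions
  have key : ∀ (inst : DecidableRel G.Adj), ∀ i j : Fin (2*n+m-2),
      (if G.Adj i j then (f i - f j)^2 else 0) ≤
      ∑ t ∈ Finset.range (m-1),
        ((if (i.val = pv t ∧ j.val = pv (t+1)) then (h' t - h' (t+1))^2 else 0) +
         (if (j.val = pv t ∧ i.val = pv (t+1)) then (h' t - h' (t+1))^2 else 0)) := by
    intro inst i j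
    have hnonneg : ∀ t ∈ Finset.range (m-1), (0:ℝ) ≤
        (if (i.val = pv t ∧ j.val = pv (t+1)) then (h' t - h' (t+1))^2 else 0) +
        (if (j.val = pv t ∧ i.val = pv (t+1)) then (h' t - h' (t+1))^2 else 0) := by
      intro t _
      apply add_nonneg
      · split_ifs
        · exact hD t
        · exact le_refl 0
      · split_ifs
        · exact hD t
        · exact le_refl 0
    by_cases hadj : G.Adj i j
    · rw [if_pos hadj]
      have hadj' : (starBridge n m c₁ v₁ c₂ v₂).Adj i j := hG ▸ hadj
      unfold starBridge at hadj'
      rw [SimpleGraph.fromRel_adj] at hadj'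
      obtain ⟨hne, hrel⟩ := hadj'
      have hzero : f i = f j →
          (f i - f j)^2 ≤ ∑ t ∈ Finset.range (m-1),
            ((if (i.val = pv t ∧ j.val = pv (t+1)) then (h' t - h' (t+1))^2 else 0) +
             (if (j.val = pv t ∧ i.val = pv (t+1)) then (h' t - h' (t+1))^2 else 0)) := by
        intro he
        rw [he]
        simpa using Finset.sum_nonneg hnonneg
      rcases hrel with (⟨hic, hjn⟩ | ⟨hic, hjn⟩ | ⟨t, ht, hi', hj'⟩) |
        (⟨hic, hjn⟩ | ⟨hic, hjn⟩ | ⟨t, ht, hi', hj'⟩)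
      · exact hzero (by
          show f' i.val = f' j.val
          rw [hfsmall i.val (by omega), hfsmall j.val hjn])
      · exact hzero (by
          show f' i.val = f' j.val
          rw [hfbig i.val (by omega), hfbig j.val hjn])
      · have htm : t < m - 1 := by omega
        have hfi : f i = h' t := by
          show f' i.val = h' t
          rw [hi']
          exact hpv t (by omega)
        have hfj : f j = h' (t+1) := by
          show f' j.val = h' (t+1)
          rw [hj']
          exact hpv (t+1) (by omega)
        have hle : (f i - f j)^2 ≤
            (if (i.val = pv t ∧ j.val = pv (t+1)) then (h' t - h' (t+1))^2 else 0) +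
            (if (j.val = pv t ∧ i.val = pv (t+1)) then (h' t - h' (t+1))^2 else 0) := by
          rw [if_pos ⟨hi', hj'⟩, hfi, hfj]
          have : (0:ℝ) ≤ (if (j.val = pv t ∧ i.val = pv (t+1)) then (h' t - h' (t+1))^2 else 0) := by
            split_ifs
            · exact hD t
            · exact le_refl 0
          linarith
        exact le_trans hle (Finset.single_le_sum hnonneg (Finset.mem_range.mpr htm))
      · exact hzero (by
          show f' i.val = f' j.val
          rw [hfsmall i.val hjn, hfsmall j.val (by omega)])
      · exact hzero (by
          show f' i.val = f' j.val
          rw [hfbig i.val hjn, hfbig j.val (by omega)])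
      · -- swapped path edge: j = pv t, i = pv (t+1)
        have htm : t < m - 1 := by omega
        have hfj : f j = h' t := by
          show f' j.val = h' t
          rw [hi']
          exact hpv t (by omega)
        have hfi : f i = h' (t+1) := by
          show f' i.val = h' (t+1)
          rw [hj']
          exact hpv (t+1) (by omega)
        have hle : (f i - f j)^2 ≤
            (if (i.val = pv t ∧ j.val = pv (t+1)) then (h' t - h' (t+1))^2 else 0) +
            (if (j.val = pv t ∧ i.val = pv (t+1)) then (h' t - h' (t+1))^2 else 0) := by
          rw [if_pos (show (j.val = pv t ∧ i.val = pv (t+1)) from ⟨hi', hj'⟩), hfi, hfj]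
          have h9 : (0:ℝ) ≤ (if (i.val = pv t ∧ j.val = pv (t+1)) then (h' t - h' (t+1))^2 else 0) := by
            split_ifs
            · exact hD t
            · exact le_refl 0
          have h10 : (h' (t+1) - h' t)^2 = (h' t - h' (t+1))^2 := by ring
          linarith
        exact le_trans hle (Finset.single_le_sum hnonneg (Finset.mem_range.mpr htm))
    · rw [if_neg hadj]
      exact Finset.sum_nonneg hnonneg
  -- assemble the quadratic form bound
  have hQ8 : ∀ (_ : DecidableRel G.Adj),
      (∑ i, ∑ j, if G.Adj i j then (f i - f j)^2 else 0) ≤ 8 := by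
    intro inst
    calc (∑ i, ∑ j, if G.Adj i j then (f i - f j)^2 else 0)
        ≤ ∑ i, ∑ j, ∑ t ∈ Finset.range (m-1),
            ((if (i.val = pv t ∧ j.val = pv (t+1)) then (h' t - h' (t+1))^2 else 0) +
             (if (j.val = pv t ∧ i.val = pv (t+1)) then (h' t - h' (t+1))^2 else 0)) :=
          Finset.sum_le_sum (fun i _ => Finset.sum_le_sum (fun j _ => key inst i j))
      _ = ∑ i : Fin (2*n+m-2), ∑ t ∈ Finset.range (m-1), ∑ j : Fin (2*n+m-2),
            ((if (i.val = pv t ∧ j.val = pv (t+1)) then (h' t - h' (t+1))^2 else 0) +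
             (if (j.val = pv t ∧ i.val = pv (t+1)) then (h' t - h' (t+1))^2 else 0)) :=
          Finset.sum_congr rfl (fun i _ => Finset.sum_comm)
      _ = ∑ t ∈ Finset.range (m-1), ∑ i : Fin (2*n+m-2), ∑ j : Fin (2*n+m-2),
            ((if (i.val = pv t ∧ j.val = pv (t+1)) then (h' t - h' (t+1))^2 else 0) +
             (if (j.val = pv t ∧ i.val = pv (t+1)) then (h' t - h' (t+1))^2 else 0)) :=
          Finset.sum_comm
      _ = ∑ t ∈ Finset.range (m-1),
            ((∑ i : Fin (2*n+m-2), ∑ j : Fin (2*n+m-2),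
              (if (i.val = pv t ∧ j.val = pv (t+1)) then (h' t - h' (t+1))^2 else 0)) +
             (∑ i : Fin (2*n+m-2), ∑ j : Fin (2*n+m-2),
              (if (j.val = pv t ∧ i.val = pv (t+1)) then (h' t - h' (t+1))^2 else 0))) := by
          refine Finset.sum_congr rfl fun t _ => ?_
          rw [← Finset.sum_add_distrib]
          exact Finset.sum_congr rfl fun i _ => Finset.sum_add_distrib
      _ ≤ ∑ t ∈ Finset.range (m-1), ((h' t - h' (t+1))^2 + (h' t - h' (t+1))^2) := by
          refine Finset.sum_le_sum fun t _ => add_le_add (double_ite_le _ _ _ (hD t)) ?_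
          rw [Finset.sum_comm]
          exact double_ite_le _ _ _ (hD t)
      _ = 2 * ∑ t ∈ Finset.range (m-1), (h' t - h' (t+1))^2 := by
          rw [Finset.mul_sum]
          exact Finset.sum_congr rfl fun t _ => (two_mul _).symm
      _ ≤ 2 * 4 := by linarith
      _ = 8 := by norm_num
  have hQ : ∀ (_ : DecidableRel G.Adj),
      f ⬝ᵥ ((G.lapMatrix ℝ) *ᵥ f) ≤ (4 / (((2*n+m-2:ℕ):ℝ) - 1)) * (f ⬝ᵥ f) := by
    intro inst
    have e1 : f ⬝ᵥ ((G.lapMatrix ℝ) *ᵥ f) = Matrix.toLinearMap₂' ℝ (G.lapMatrix ℝ) f f :=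
      (Matrix.toLinearMap₂'_apply' _ _ _).symm
    rw [e1, SimpleGraph.lapMatrix_toLinearMap₂' ℝ G f]
    have h8 := hQ8 inst
    have hff : f ⬝ᵥ f = ∑ i, (f i)^2 := by
      simp only [dotProduct]
      exact Finset.sum_congr rfl fun i _ => (pow_two (f i)).symm
    have h4c : (4:ℝ) ≤ (4 / (((2*n+m-2:ℕ):ℝ) - 1)) * (f ⬝ᵥ f) := by
      rw [hff]
      have h5 := mul_le_mul_of_nonneg_left hsumsq hc
      calc (4:ℝ) = (4 / (((2*n+m-2:ℕ):ℝ) - 1)) * (((2*n+m-2:ℕ):ℝ) - 1) := by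
            field_simp
        _ ≤ _ := h5
    linarith
  have hl2 := lambda2_le hN G f hx0 hxne _ hc hQ
  refine le_trans hl2 ?_
  rw [div_le_div_iff₀ hden (by linarith : (0:ℝ) < 2*(n:ℝ)+(m:ℝ)-4), hR]
  nlinarith [mul_nonneg (by linarith : (0:ℝ) ≤ (n:ℝ)-2) (by linarith : (0:ℝ) ≤ (m:ℝ)),
    mul_nonneg (by linarith : (0:ℝ) ≤ (n:ℝ)-2) (by linarith : (0:ℝ) ≤ (n:ℝ)-2),
    mul_nonneg (by linarith : (0:ℝ) ≤ (n:ℝ)-2) (by linarith : (0:ℝ) ≤ (m:ℝ)-2)]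
end

section
/- Let T_n^m be the graph formed by joining two full binary trees each with n vertices (n+1 a power of 2) by a path P_m whose endpoints are vertices of the trees. Then λ₂(T_n^m) ≤ 5/(2(n−1)). -/
open Matrix SimpleGraph
open Finset
set_option maxHeartbeats 1000000

/-- The binary tree bridge graph `T_n^m` on `2n+m-2` vertices: a full binary tree in heap
layout on vertices `0..n-1` (vertex `i` has children `2i+1`, `2i+2`), another on vertices
`n+m-2..2n+m-3`, joined by a path `P_m` from vertex `v₁` of the first tree to vertex
`n+m-2+v₂` of the second tree. -/
def treeBridge (n m : ℕ) (v₁ v₂ : Fin n) : SimpleGraph (Fin (2 * n + m - 2)) :=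
  SimpleGraph.fromRel (fun i j =>
    (j.val < n ∧ (j.val = 2 * i.val + 1 ∨ j.val = 2 * i.val + 2)) ∨
    (n + m - 2 ≤ i.val ∧ n + m - 2 ≤ j.val ∧
      (j.val - (n + m - 2) = 2 * (i.val - (n + m - 2)) + 1 ∨
       j.val - (n + m - 2) = 2 * (i.val - (n + m - 2)) + 2)) ∨
    (∃ t, t + 1 < m ∧ i.val = pathVert n m v₁ v₂ t ∧ j.val = pathVert n m v₁ v₂ (t + 1)))

section Aux

lemma sum_dotProduct' {N : ℕ} {α : Type*} [Fintype α] (s : Finset α) (f : α → Fin N → ℝ)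
    (v : Fin N → ℝ) : (∑ i ∈ s, f i) ⬝ᵥ v = ∑ i ∈ s, f i ⬝ᵥ v := by
  simp only [dotProduct, Finset.sum_apply, Finset.sum_mul]
  rw [Finset.sum_comm]

lemma dotProduct_sum' {N : ℕ} {α : Type*} [Fintype α] (s : Finset α) (v : Fin N → ℝ)
    (f : α → Fin N → ℝ) : v ⬝ᵥ (∑ i ∈ s, f i) = ∑ i ∈ s, v ⬝ᵥ f i := by
  simp only [dotProduct, Finset.sum_apply, Finset.mul_sum]
  rw [Finset.sum_comm]

lemma eig_lower {N : ℕ} (hN : 1 < N) {A : Matrix (Fin N) (Fin N) ℝ} (hA : A.PosSemidef)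
    (y : Fin N → ℝ)
    (hy : ⇑(hA.1.eigenvectorBasis (Tuple.sort hA.1.eigenvalues ⟨0, Nat.lt_of_lt_of_le Nat.zero_lt_one hN.le⟩)) ⬝ᵥ y = 0) :
    sortedEigs A hA.1 ⟨1, hN⟩ * (y ⬝ᵥ y) ≤ y ⬝ᵥ (A *ᵥ y) := by
  classical
  set σ := Tuple.sort hA.1.eigenvalues with hσ
  set b := hA.1.eigenvectorBasis with hb
  set lam : Fin N → ℝ := sortedEigs A hA.1 with hlam
  set c : Fin N → ℝ := fun i => ⇑(b (σ i)) ⬝ᵥ y with hc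
  have hiprod : ∀ u v : EuclideanSpace ℝ (Fin N), @inner ℝ _ _ u v = ⇑u ⬝ᵥ ⇑v := by
    intro u v
    simp [PiLp.inner_apply, dotProduct, mul_comm]
  -- orthonormality in dotProduct form
  have hortho : ∀ i j : Fin N, ⇑(b (σ i)) ⬝ᵥ ⇑(b (σ j)) = if i = j then 1 else 0 := by
    intro i j
    have := orthonormal_iff_ite.mp b.orthonormal (σ i) (σ j)
    rw [hiprod] at this
    rw [this]
    simp [σ.injective.eq_iff]
  -- expansion of y
  have hrep : y = ∑ i : Fin N, c i • ⇑(b (σ i)) := by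
    have h1 : ∑ i : Fin N, c i • ⇑(b (σ i)) = ∑ j : Fin N, (⇑(b j) ⬝ᵥ y) • ⇑(b j) :=
      (Equiv.sum_comp σ (fun j => (⇑(b j) ⬝ᵥ y) • ⇑(b j)))
    have h2 : (∑ j : Fin N, (inner ℝ (b j) (WithLp.toLp 2 y) : ℝ) • ⇑(b j)) = y := by
      have h := congrArg WithLp.ofLp (b.sum_repr' (WithLp.toLp 2 y))
      simp only [WithLp.ofLp_sum, WithLp.ofLp_smul, WithLp.ofLp_toLp] at h; exact h
    rw [h1]; conv_lhs => rw [← h2]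
    skip
    refine Finset.sum_congr rfl fun j _ => ?_
    rw [hiprod]
  have hyy : y ⬝ᵥ y = ∑ i : Fin N, (c i)^2 := by
    conv_lhs => rw [hrep]
    rw [sum_dotProduct']
    simp_rw [dotProduct_sum', smul_dotProduct, dotProduct_smul, hortho]
    simp [Finset.sum_ite_eq', pow_two]
  have hAw : ∀ i, A *ᵥ ⇑(b (σ i)) = lam i • ⇑(b (σ i)) := fun i =>
    hA.1.mulVec_eigenvectorBasis (σ i)
  have hAy : y ⬝ᵥ (A *ᵥ y) = ∑ i : Fin N, lam i * (c i)^2 := by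
    conv_lhs => rw [hrep]
    rw [show A *ᵥ (∑ i : Fin N, c i • ⇑(b (σ i))) = ∑ i : Fin N, c i • (lam i • ⇑(b (σ i))) by
      rw [show (A *ᵥ ∑ i : Fin N, c i • ⇑(b (σ i))) = A.mulVecLin (∑ i : Fin N, c i • ⇑(b (σ i))) from rfl,
        map_sum]
      refine Finset.sum_congr rfl fun i _ => ?_
      rw [show A.mulVecLin (c i • ⇑(b (σ i))) = A *ᵥ (c i • ⇑(b (σ i))) from rfl,
        Matrix.mulVec_smul, hAw i]]
    rw [sum_dotProduct']
    simp_rw [dotProduct_sum', smul_dotProduct, dotProduct_smul, hortho]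
    simp only [smul_eq_mul, mul_ite, mul_one, mul_zero]
    refine Finset.sum_congr rfl fun i _ => ?_
    rw [Finset.sum_ite_eq]
    simp only [Finset.mem_univ, if_true]
    ring
  have hc0 : c ⟨0, Nat.lt_of_lt_of_le Nat.zero_lt_one hN.le⟩ = 0 := hy
  have hmono : Monotone lam := Tuple.monotone_sort hA.1.eigenvalues
  have key : ∀ i : Fin N, lam ⟨1, hN⟩ * (c i)^2 ≤ lam i * (c i)^2 := by
    intro i
    rcases eq_or_ne i ⟨0, Nat.lt_of_lt_of_le Nat.zero_lt_one hN.le⟩ with h | h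
    · subst h; rw [hc0]; simp
    · refine mul_le_mul_of_nonneg_right (hmono ?_) (sq_nonneg _)
      have : i.val ≠ 0 := fun hv => h (Fin.ext hv)
      exact Fin.mk_le_of_le_val (by omega)
  calc lam ⟨1, hN⟩ * (y ⬝ᵥ y) = ∑ i : Fin N, lam ⟨1, hN⟩ * (c i)^2 := by
        rw [hyy, Finset.mul_sum]
    _ ≤ ∑ i : Fin N, lam i * (c i)^2 := Finset.sum_le_sum fun i _ => key i
    _ = y ⬝ᵥ (A *ᵥ y) := hAy.symm

lemma rayleigh {N : ℕ} (hN : 1 < N) {A : Matrix (Fin N) (Fin N) ℝ} (hA : A.PosSemidef)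
    (h1 : A *ᵥ (fun _ => (1:ℝ)) = 0) (x : Fin N → ℝ) (hsum : ∑ i, x i = 0) :
    sortedEigs A hA.1 ⟨1, hN⟩ * (x ⬝ᵥ x) ≤ x ⬝ᵥ (A *ᵥ x) := by
  classical
  have hAx : 0 ≤ x ⬝ᵥ (A *ᵥ x) := by
    have := hA.dotProduct_mulVec_nonneg x
    simpa using this
  have hxx : 0 ≤ x ⬝ᵥ x := by
    simp only [dotProduct]
    exact Finset.sum_nonneg fun i _ => mul_self_nonneg _
  set lam := sortedEigs A hA.1 ⟨1, hN⟩ with hlamdef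
  rcases le_or_gt lam 0 with hl | hl
  · nlinarith
  set i0 : Fin N := ⟨0, Nat.lt_of_lt_of_le Nat.zero_lt_one hN.le⟩ with hi0
  set u : Fin N → ℝ := ⇑(hA.1.eigenvectorBasis (Tuple.sort hA.1.eigenvalues i0)) with hu
  by_cases h0 : u ⬝ᵥ x = 0
  · exact eig_lower hN hA x h0
  · set ov : Fin N → ℝ := fun _ => 1 with hov
    set α : ℝ := u ⬝ᵥ x with hα
    set β : ℝ := -(u ⬝ᵥ ov) with hβ
    set y : Fin N → ℝ := α • ov + β • x with hy
    have hyu : u ⬝ᵥ y = 0 := by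
      rw [hy, dotProduct_add, dotProduct_smul, dotProduct_smul]
      simp only [smul_eq_mul, ← hα, ← hov]
      rw [hβ]; ring
    have hkey := eig_lower hN hA y hyu
    have hovx : ov ⬝ᵥ x = 0 := by
      simpa [hov, dotProduct] using hsum
    have hxov : x ⬝ᵥ ov = 0 := by
      rw [dotProduct_comm]; exact hovx
    have hovov : ov ⬝ᵥ ov = (N : ℝ) := by
      simp [hov, dotProduct]
    have hAov : ov ⬝ᵥ (A *ᵥ x) = 0 := by
      rw [Matrix.dotProduct_mulVec, ← Matrix.mulVec_transpose]
      have hAt : Aᵀ = A := by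
        have := hA.1
        rwa [Matrix.IsHermitian, Matrix.conjTranspose_eq_transpose_of_trivial] at this
      rw [hAt, h1]
      simp [dotProduct]
    have hyy : y ⬝ᵥ y = α^2 * N + β^2 * (x ⬝ᵥ x) := by
      rw [hy]
      simp only [add_dotProduct, dotProduct_add, smul_dotProduct,
        dotProduct_smul, smul_eq_mul]
      rw [hovov, hovx, hxov]
      ring
    have hyAy : y ⬝ᵥ (A *ᵥ y) = β^2 * (x ⬝ᵥ (A *ᵥ x)) := by
      rw [hy, Matrix.mulVec_add, Matrix.mulVec_smul, Matrix.mulVec_smul, h1]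
      simp only [smul_zero, zero_add, add_dotProduct, smul_dotProduct,
        dotProduct_smul, smul_eq_mul]
      rw [hAov]
      ring
    rw [hyy, hyAy] at hkey
    have hα2 : 0 < α^2 := by positivity
    have hN0 : (0:ℝ) < N := by positivity
    nlinarith [sq_nonneg β, mul_pos (mul_pos hl hα2) hN0, mul_nonneg (sq_nonneg β) hAx]


def Xfun (n m : ℕ) : ℕ → ℝ := fun k => if k < n then (1:ℝ) else if n + m - 2 ≤ k then -1 else 0

lemma cross {n m : ℕ} (hm : 2 ≤ m) (v₁ v₂ : Fin n) {i j : ℕ}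
    (hr : (j < n ∧ (j = 2*i+1 ∨ j = 2*i+2)) ∨
      (n+m-2 ≤ i ∧ n+m-2 ≤ j ∧ (j-(n+m-2) = 2*(i-(n+m-2))+1 ∨ j-(n+m-2) = 2*(i-(n+m-2))+2)) ∨
      (∃ t, t+1 < m ∧ i = pathVert n m v₁ v₂ t ∧ j = pathVert n m v₁ v₂ (t+1)))
    (hx : Xfun n m i ≠ Xfun n m j) :
    (i = pathVert n m v₁ v₂ 0 ∧ j = pathVert n m v₁ v₂ 1) ∨
    (i = pathVert n m v₁ v₂ (m-2) ∧ j = pathVert n m v₁ v₂ (m-1)) := by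
  rcases hr with ⟨hjn, hj⟩ | ⟨hi, hj, -⟩ | ⟨t, ht, hit, hjt⟩
  · exfalso; apply hx
    have hin : i < n := by omega
    simp [Xfun, hin, hjn]
  · exfalso; apply hx
    have h1 : ¬ i < n := by omega
    have h2 : ¬ j < n := by omega
    simp [Xfun, h1, h2, hi, hj]
  · rcases Nat.eq_zero_or_pos t with rfl | htpos
    · exact Or.inl ⟨hit, hjt⟩
    · by_cases hte : t = m - 2
      · subst hte
        refine Or.inr ⟨hit, ?_⟩
        rw [hjt]; congr 1; omega
      · exfalso; apply hx
        have h1 : pathVert n m v₁ v₂ t = n + t - 1 := by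
          unfold pathVert; rw [if_neg (by omega), if_neg (by omega)]
        have h2 : pathVert n m v₁ v₂ (t+1) = n + t := by
          unfold pathVert; rw [if_neg (by omega), if_neg (by omega)]; omega
        rw [hit, hjt, h1, h2]
        simp only [Xfun]
        rw [if_neg (by omega), if_neg (by omega), if_neg (by omega), if_neg (by omega)]

lemma Ico_split (n m : ℕ) (hm : 2 ≤ m) (f : ℕ → ℝ) :
    ∑ k ∈ Finset.range (2*n+m-2), f k =
      ((∑ k ∈ Finset.Ico 0 n, f k) + ∑ k ∈ Finset.Ico n (n+m-2), f k) +
        ∑ k ∈ Finset.Ico (n+m-2) (2*n+m-2), f k := by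
  rw [Finset.range_eq_Ico, ← Finset.sum_Ico_consecutive f (Nat.zero_le (n+m-2)) (by omega),
    ← Finset.sum_Ico_consecutive f (Nat.zero_le n) (by omega)]

lemma Xsum (n m : ℕ) (hm : 2 ≤ m) : ∑ k ∈ Finset.range (2*n+m-2), Xfun n m k = 0 := by
  rw [Ico_split n m hm]
  have p1 : ∑ k ∈ Finset.Ico 0 n, Xfun n m k = (n:ℝ) := by
    rw [Finset.sum_congr rfl (fun k hk => show Xfun n m k = 1 by
      simp [Xfun, (Finset.mem_Ico.mp hk).2])]
    simp
  have p2 : ∑ k ∈ Finset.Ico n (n+m-2), Xfun n m k = 0 := by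
    rw [Finset.sum_congr rfl (fun k hk => show Xfun n m k = 0 by
      have := Finset.mem_Ico.mp hk
      simp only [Xfun]
      rw [if_neg (by omega), if_neg (by omega)])]
    simp
  have p3 : ∑ k ∈ Finset.Ico (n+m-2) (2*n+m-2), Xfun n m k = -(n:ℝ) := by
    rw [Finset.sum_congr rfl (fun k hk => show Xfun n m k = -1 by
      have := Finset.mem_Ico.mp hk
      simp only [Xfun]
      rw [if_neg (by omega), if_pos (by omega)])]
    rw [Finset.sum_const, Nat.card_Ico, show 2*n+m-2-(n+m-2) = n by omega]
    simp
  rw [p1, p2, p3]; ring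

lemma Xsumsq (n m : ℕ) (hm : 2 ≤ m) :
    ∑ k ∈ Finset.range (2*n+m-2), Xfun n m k * Xfun n m k = 2*(n:ℝ) := by
  rw [Ico_split n m hm]
  have p1 : ∑ k ∈ Finset.Ico 0 n, Xfun n m k * Xfun n m k = (n:ℝ) := by
    rw [Finset.sum_congr rfl (fun k hk => show Xfun n m k * Xfun n m k = 1 by
      simp [Xfun, (Finset.mem_Ico.mp hk).2])]
    simp
  have p2 : ∑ k ∈ Finset.Ico n (n+m-2), Xfun n m k * Xfun n m k = 0 := by
    rw [Finset.sum_congr rfl (fun k hk => show Xfun n m k * Xfun n m k = 0 by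
      have := Finset.mem_Ico.mp hk
      simp only [Xfun]
      rw [if_neg (by omega), if_neg (by omega)]
      ring)]
    simp
  have p3 : ∑ k ∈ Finset.Ico (n+m-2) (2*n+m-2), Xfun n m k * Xfun n m k = (n:ℝ) := by
    rw [Finset.sum_congr rfl (fun k hk => show Xfun n m k * Xfun n m k = 1 by
      have := Finset.mem_Ico.mp hk
      simp only [Xfun]
      rw [if_neg (by omega), if_pos (by omega)]
      ring)]
    rw [Finset.sum_const, Nat.card_Ico, show 2*n+m-2-(n+m-2) = n by omega]
    simp
  rw [p1, p2, p3]; ring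

end Aux

/-- Upper bound for the second Laplacian eigenvalue of the full-binary-tree bridge graph:
`λ₂(T_n^m) ≤ 5/(2(n-1))`. -/
theorem treeBridge_lambda2_upper (n m : ℕ) (hfull : ∃ d : ℕ, 2 ≤ d ∧ n + 1 = 2 ^ d)
    (hm : 2 ≤ m) (v₁ v₂ : Fin n) :
    lambda2 (treeBridge n m v₁ v₂) ≤ 5 / (2 * ((n : ℝ) - 1)) := by
  classical
  obtain ⟨d, hd2, hpow⟩ := hfull
  have hn3 : 3 ≤ n := by
    have h4 : (2:ℕ)^2 ≤ 2^d := Nat.pow_le_pow_right (by norm_num) hd2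
    norm_num at h4
    omega
  have hN : 1 < 2*n+m-2 := by omega
  set G := treeBridge n m v₁ v₂ with hG
  letI : DecidableRel G.Adj := Classical.decRel G.Adj
  set x : Fin (2*n+m-2) → ℝ := fun i => Xfun n m i.val with hxdef
  have hsum : ∑ i, x i = 0 := by
    rw [show ∑ i, x i = ∑ k ∈ Finset.range (2*n+m-2), Xfun n m k from
      Fin.sum_univ_eq_sum_range (Xfun n m) (2*n+m-2)]
    exact Xsum n m hm
  have hxx : x ⬝ᵥ x = 2*(n:ℝ) := by
    rw [show x ⬝ᵥ x = ∑ k ∈ Finset.range (2*n+m-2), Xfun n m k * Xfun n m k from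
      Fin.sum_univ_eq_sum_range (fun k => Xfun n m k * Xfun n m k) (2*n+m-2)]
    exact Xsumsq n m hm
  have ind : ∀ (p q : Fin (2*n+m-2)) (v : ℝ),
      (∑ i, ∑ j, if i = p ∧ j = q then v else 0) = v := by
    intro p q v
    simp [ite_and, Finset.sum_ite_eq']
  have hadj_case : ∀ i j : Fin (2*n+m-2), G.Adj i j → x i ≠ x j →
      (i.val = pathVert n m v₁ v₂ 0 ∧ j.val = pathVert n m v₁ v₂ 1) ∨
      (i.val = pathVert n m v₁ v₂ (m-2) ∧ j.val = pathVert n m v₁ v₂ (m-1)) ∨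
      (j.val = pathVert n m v₁ v₂ 0 ∧ i.val = pathVert n m v₁ v₂ 1) ∨
      (j.val = pathVert n m v₁ v₂ (m-2) ∧ i.val = pathVert n m v₁ v₂ (m-1)) := by
    intro i j hadj hne
    rw [hG, treeBridge, SimpleGraph.fromRel_adj] at hadj
    obtain ⟨-, hr | hr⟩ := hadj
    · rcases cross hm v₁ v₂ hr hne with h | h
      · exact Or.inl h
      · exact Or.inr (Or.inl h)
    · rcases cross hm v₁ v₂ hr (Ne.symm hne) with h | h
      · exact Or.inr (Or.inr (Or.inl h))
      · exact Or.inr (Or.inr (Or.inr h))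
  have e0 : pathVert n m v₁ v₂ 0 = v₁.val := rfl
  have em1 : pathVert n m v₁ v₂ (m-1) = n+m-2+v₂.val := by
    unfold pathVert; rw [if_neg (by omega), if_pos rfl]
  have hS : (∑ i, ∑ j, if G.Adj i j then (x i - x j)^2 else 0) ≤ 8 := by
    rcases eq_or_lt_of_le hm with hm2 | hm3
    · -- m = 2
      subst hm2
      have e1 : pathVert n 2 v₁ v₂ 1 = n + v₂.val := by
        rw [show (1:ℕ) = 2-1 from rfl, em1]; omega
      have em2 : pathVert n 2 v₁ v₂ (2-2) = v₁.val := e0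
      set a : Fin (2*n+2-2) := ⟨v₁.val, by omega⟩ with ha
      set b : Fin (2*n+2-2) := ⟨n+v₂.val, by have := v₂.isLt; omega⟩ with hb
      have hxa : x a = 1 := by
        show Xfun n 2 v₁.val = 1
        simp [Xfun, v₁.isLt]
      have hxb : x b = -1 := by
        show Xfun n 2 (n+v₂.val) = -1
        simp only [Xfun]
        rw [if_neg (by omega), if_pos (by omega)]
      have hbound : ∀ i j : Fin (2*n+2-2), (if G.Adj i j then (x i - x j)^2 else 0) ≤
          (if i = a ∧ j = b then (4:ℝ) else 0) + (if i = b ∧ j = a then 4 else 0) := by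
        intro i j
        have hrhs0 : (0:ℝ) ≤ (if i = a ∧ j = b then (4:ℝ) else 0) +
            (if i = b ∧ j = a then 4 else 0) := by
          apply add_nonneg <;> { split <;> norm_num }
        by_cases hadj : G.Adj i j
        · by_cases hne : x i = x j
          · rw [if_pos hadj, hne, sub_self]
            simpa using hrhs0
          · have em2v : pathVert n 2 v₁ v₂ (2-2) = v₁.val := by norm_num [e0]
            have em1v : pathVert n 2 v₁ v₂ (2-1) = n+v₂.val := by norm_num [e1]
            have hval : (i.val = v₁.val ∧ j.val = n+v₂.val) ∨
                (i.val = n+v₂.val ∧ j.val = v₁.val) := by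
              rcases hadj_case i j hadj hne with ⟨h1,h2⟩|⟨h1,h2⟩|⟨h1,h2⟩|⟨h1,h2⟩
              · rw [e0] at h1; rw [e1] at h2; exact Or.inl ⟨h1,h2⟩
              · rw [em2v] at h1; rw [em1v] at h2; exact Or.inl ⟨h1,h2⟩
              · rw [e0] at h1; rw [e1] at h2; exact Or.inr ⟨h2,h1⟩
              · rw [em2v] at h1; rw [em1v] at h2; exact Or.inr ⟨h2,h1⟩
            rcases hval with ⟨h1,h2⟩ | ⟨h1,h2⟩
            · have hia : i = a := Fin.ext h1
              have hjb : j = b := Fin.ext h2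
              rw [if_pos hadj, hia, hjb, hxa, hxb,
                if_pos (⟨rfl, rfl⟩ : a = a ∧ b = b)]
              have : ((1:ℝ) - (-1))^2 = 4 := by norm_num
              rw [this]
              split <;> norm_num
            · have hib : i = b := Fin.ext h1
              have hja : j = a := Fin.ext h2
              rw [if_pos hadj, hib, hja, hxa, hxb,
                if_pos (⟨rfl, rfl⟩ : b = b ∧ a = a)]
              have : ((-1:ℝ) - 1)^2 = 4 := by norm_num
              rw [this]
              split <;> norm_num
        · rw [if_neg hadj]; exact hrhs0
      calc (∑ i, ∑ j, if G.Adj i j then (x i - x j)^2 else 0)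
          ≤ ∑ i, ∑ j, ((if i = a ∧ j = b then (4:ℝ) else 0) +
              (if i = b ∧ j = a then 4 else 0)) :=
            Finset.sum_le_sum fun i _ => Finset.sum_le_sum fun j _ => hbound i j
        _ = 8 := by
            simp_rw [Finset.sum_add_distrib]
            rw [ind a b 4, ind b a 4]; norm_num
    · -- m ≥ 3
      have hm3' : 3 ≤ m := hm3
      have e1 : pathVert n m v₁ v₂ 1 = n := by
        unfold pathVert; rw [if_neg (by omega), if_neg (by omega)]; omega
      have em2 : pathVert n m v₁ v₂ (m-2) = n+m-3 := by
        unfold pathVert; rw [if_neg (by omega), if_neg (by omega)]; omega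
      obtain ⟨a, ha⟩ : ∃ a : Fin (2*n+m-2), a.val = v₁.val :=
        ⟨⟨v₁.val, by have := v₁.isLt; omega⟩, rfl⟩
      obtain ⟨b, hb⟩ : ∃ b : Fin (2*n+m-2), b.val = n := ⟨⟨n, by omega⟩, rfl⟩
      obtain ⟨c, hc⟩ : ∃ c : Fin (2*n+m-2), c.val = n+m-3 := ⟨⟨n+m-3, by omega⟩, rfl⟩
      obtain ⟨e, he⟩ : ∃ e : Fin (2*n+m-2), e.val = n+m-2+v₂.val :=
        ⟨⟨n+m-2+v₂.val, by have := v₂.isLt; omega⟩, rfl⟩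
      have hxa : x a = 1 := by
        show Xfun n m a.val = 1
        rw [ha]
        simp [Xfun, v₁.isLt]
      have hxb : x b = 0 := by
        show Xfun n m b.val = 0
        rw [hb]
        simp only [Xfun]
        rw [if_neg (by omega), if_neg (by omega)]
      have hxc : x c = 0 := by
        show Xfun n m c.val = 0
        rw [hc]
        simp only [Xfun]
        rw [if_neg (by omega), if_neg (by omega)]
      have hxe : x e = -1 := by
        show Xfun n m e.val = -1
        rw [he]
        simp only [Xfun]
        rw [if_neg (by omega), if_pos (by omega)]
      have hbound : ∀ i j : Fin (2*n+m-2), (if G.Adj i j then (x i - x j)^2 else 0) ≤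
          (if i = a ∧ j = b then (1:ℝ) else 0) + (if i = b ∧ j = a then 1 else 0) +
          (if i = c ∧ j = e then 1 else 0) + (if i = e ∧ j = c then 1 else 0) := by
        intro i j
        have hrhs0 : (0:ℝ) ≤ (if i = a ∧ j = b then (1:ℝ) else 0) +
            (if i = b ∧ j = a then 1 else 0) + (if i = c ∧ j = e then 1 else 0) +
            (if i = e ∧ j = c then 1 else 0) := by
          apply add_nonneg
          apply add_nonneg
          apply add_nonneg
          all_goals split <;> norm_num
        by_cases hadj : G.Adj i j
        · by_cases hne : x i = x j
          · rw [if_pos hadj, hne, sub_self]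
            simpa using hrhs0
          · rw [if_pos hadj]
            rcases hadj_case i j hadj hne with ⟨h1,h2⟩|⟨h1,h2⟩|⟨h1,h2⟩|⟨h1,h2⟩
            · have hia : i = a := Fin.ext (by rw [h1, e0, ha])
              have hjb : j = b := Fin.ext (by rw [h2, e1, hb])
              rw [hia, hjb, hxa, hxb, if_pos (⟨rfl, rfl⟩ : a = a ∧ b = b)]
              have : ((1:ℝ) - 0)^2 = 1 := by norm_num
              rw [this]
              have h2' : (0:ℝ) ≤ (if a = b ∧ b = a then (1:ℝ) else 0) := by split <;> norm_num
              have h3' : (0:ℝ) ≤ (if a = c ∧ b = e then (1:ℝ) else 0) := by split <;> norm_num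
              have h4' : (0:ℝ) ≤ (if a = e ∧ b = c then (1:ℝ) else 0) := by split <;> norm_num
              linarith
            · have hic : i = c := Fin.ext (by rw [h1, em2, hc])
              have hje : j = e := Fin.ext (by rw [h2, em1, he])
              rw [hic, hje, hxc, hxe, if_pos (⟨rfl, rfl⟩ : c = c ∧ e = e)]
              have : ((0:ℝ) - (-1))^2 = 1 := by norm_num
              rw [this]
              have h1' : (0:ℝ) ≤ (if c = a ∧ e = b then (1:ℝ) else 0) := by split <;> norm_num
              have h2' : (0:ℝ) ≤ (if c = b ∧ e = a then (1:ℝ) else 0) := by split <;> norm_num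
              have h4' : (0:ℝ) ≤ (if c = e ∧ e = c then (1:ℝ) else 0) := by split <;> norm_num
              linarith
            · have hib : i = b := Fin.ext (by rw [h2, e1, hb])
              have hja : j = a := Fin.ext (by rw [h1, e0, ha])
              rw [hib, hja, hxa, hxb, if_pos (⟨rfl, rfl⟩ : b = b ∧ a = a)]
              have : ((0:ℝ) - 1)^2 = 1 := by norm_num
              rw [this]
              have h1' : (0:ℝ) ≤ (if b = a ∧ a = b then (1:ℝ) else 0) := by split <;> norm_num
              have h3' : (0:ℝ) ≤ (if b = c ∧ a = e then (1:ℝ) else 0) := by split <;> norm_num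
              have h4' : (0:ℝ) ≤ (if b = e ∧ a = c then (1:ℝ) else 0) := by split <;> norm_num
              linarith
            · have hie : i = e := Fin.ext (by rw [h2, em1, he])
              have hjc : j = c := Fin.ext (by rw [h1, em2, hc])
              rw [hie, hjc, hxc, hxe, if_pos (⟨rfl, rfl⟩ : e = e ∧ c = c)]
              have : ((-1:ℝ) - 0)^2 = 1 := by norm_num
              rw [this]
              have h1' : (0:ℝ) ≤ (if e = a ∧ c = b then (1:ℝ) else 0) := by split <;> norm_num
              have h2' : (0:ℝ) ≤ (if e = b ∧ c = a then (1:ℝ) else 0) := by split <;> norm_num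
              have h3' : (0:ℝ) ≤ (if e = c ∧ c = e then (1:ℝ) else 0) := by split <;> norm_num
              linarith
        · rw [if_neg hadj]; exact hrhs0
      calc (∑ i, ∑ j, if G.Adj i j then (x i - x j)^2 else 0)
          ≤ ∑ i, ∑ j, ((if i = a ∧ j = b then (1:ℝ) else 0) +
              (if i = b ∧ j = a then 1 else 0) + (if i = c ∧ j = e then 1 else 0) +
              (if i = e ∧ j = c then 1 else 0)) :=
            Finset.sum_le_sum fun i _ => Finset.sum_le_sum fun j _ => hbound i j
        _ ≤ 8 := by
            simp_rw [Finset.sum_add_distrib]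
            rw [ind a b 1, ind b a 1, ind c e 1, ind e c 1]; norm_num
  have h1 : G.lapMatrix ℝ *ᵥ (fun _ => (1:ℝ)) = 0 := G.lapMatrix_mulVec_const_eq_zero
  have hray := rayleigh hN (G.posSemidef_lapMatrix ℝ) h1 x hsum
  have hquad : x ⬝ᵥ (G.lapMatrix ℝ *ᵥ x) =
      (∑ i, ∑ j, if G.Adj i j then (x i - x j)^2 else 0) / 2 := by
    rw [← Matrix.toLinearMap₂'_apply', SimpleGraph.lapMatrix_toLinearMap₂' ℝ G x]
  have hlam_eq : lambda2 G = sortedEigs (G.lapMatrix ℝ) (G.posSemidef_lapMatrix ℝ).1 ⟨1, hN⟩ := by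
    simp only [lambda2, sortedLapEigs]
    rw [dif_pos hN]
  have hlam0 : 0 ≤ lambda2 G := by
    rw [hlam_eq]
    exact (G.posSemidef_lapMatrix ℝ).eigenvalues_nonneg _
  have hmain : lambda2 G * (2*(n:ℝ)) ≤ 4 := by
    rw [← hxx, hlam_eq]
    calc sortedEigs (G.lapMatrix ℝ) (G.posSemidef_lapMatrix ℝ).1 ⟨1, hN⟩ * (x ⬝ᵥ x)
        ≤ x ⬝ᵥ (G.lapMatrix ℝ *ᵥ x) := hray
      _ = (∑ i, ∑ j, if G.Adj i j then (x i - x j)^2 else 0) / 2 := hquad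
      _ ≤ 8/2 := by linarith
      _ = 4 := by norm_num
  have hnR : (3:ℝ) ≤ (n:ℝ) := by exact_mod_cast hn3
  rw [le_div_iff₀ (by linarith : (0:ℝ) < 2*((n:ℝ)-1))]
  nlinarith [hlam0, hmain]
end

section
/- Let T_{n×l}^2 be the graph formed by l disjoint copies of a full binary tree with n vertices, where the root of the j-th copy is joined by an edge to the root of the (j+1)-th copy for 1 ≤ j ≤ l−1. Then λ₂(T_{n×l}^2) ≤ 2/(n−1). -/
open Matrix SimpleGraph

/-- The graph `T_{n×l}^2`: `l` disjoint copies of the full binary tree on `n` vertices in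
heap layout (copy `q` occupies vertices `n*q .. n*q+n-1`, rooted at `n*q`, with vertex
`n*q + s` having children `n*q + 2s+1` and `n*q + 2s+2`), where the root of copy `q` is
joined by an edge to the root of copy `q+1` for `0 ≤ q ≤ l-2`. -/
def treeChain (n l : ℕ) : SimpleGraph (Fin (n * l)) :=
  SimpleGraph.fromRel (fun i j =>
    (∃ q, q < l ∧ n * q ≤ i.val ∧ i.val < n * q + n ∧ n * q ≤ j.val ∧ j.val < n * q + n ∧
      (j.val - n * q = 2 * (i.val - n * q) + 1 ∨ j.val - n * q = 2 * (i.val - n * q) + 2)) ∨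
    (∃ q, q + 1 < l ∧ i.val = n * q ∧ j.val = n * (q + 1)))

open Finset in
-- auxiliary
noncomputable def fsign (s : ℕ) : ℝ :=
  if s = 0 then 0 else if (s + 1) / 2 ^ (Nat.log2 (s + 1) - 1) = 2 then 1 else -1

noncomputable def aij (n a b : ℕ) : ℝ :=
  if a % n = 0 ∧ (b = a + 1 ∨ b = a + 2) then 1 else 0

lemma inner_eq_dot {N : ℕ} (x y : EuclideanSpace ℝ (Fin N)) :
    (inner ℝ x y : ℝ) = x ⬝ᵥ y := by
  simp [PiLp.inner_apply, dotProduct, RCLike.inner_apply, mul_comm]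

lemma second_eig_le {N : ℕ} (A : Matrix (Fin N) (Fin N) ℝ) (hA : A.IsHermitian)
    (hPSD : A.PosSemidef) (v w : Fin N → ℝ) (c : ℝ)
    (hv : A *ᵥ v = 0) (hvne : v ≠ 0) (hwne : w ≠ 0)
    (horth : v ⬝ᵥ w = 0) (hq : w ⬝ᵥ (A *ᵥ w) ≤ c * (w ⬝ᵥ w))
    (h1N : 1 < N) : sortedEigs A hA ⟨1, h1N⟩ ≤ c := by
  classical
  set B := hA.eigenvectorBasis with hB
  set lam := hA.eigenvalues with hlam
  -- coordinate facts
  have hrepr : ∀ (x : Fin N → ℝ) (i : Fin N),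
      B.repr (WithLp.toLp 2 x) i = (B i : Fin N → ℝ) ⬝ᵥ x := by
    intro x i
    rw [B.repr_apply_apply, inner_eq_dot]
  have hAx : ∀ (x : Fin N → ℝ) (i : Fin N),
      B.repr (WithLp.toLp 2 (A *ᵥ x)) i = lam i * B.repr (WithLp.toLp 2 x) i := by
    intro x i
    rw [hrepr, hrepr]
    have hAt : Aᵀ = A := by
      rw [← Matrix.conjTranspose_eq_transpose_of_trivial, hA.eq]
    have h1 : (B i : Fin N → ℝ) ⬝ᵥ (A *ᵥ x) = (A *ᵥ (B i : Fin N → ℝ)) ⬝ᵥ x := by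
      rw [Matrix.dotProduct_mulVec, ← Matrix.mulVec_transpose, hAt]
    have h2 : A *ᵥ (B i : Fin N → ℝ) = lam i • (B i : Fin N → ℝ) :=
      hA.mulVec_eigenvectorBasis i
    rw [h1, h2, smul_dotProduct, smul_eq_mul]
  have hdot : ∀ (x y : Fin N → ℝ), x ⬝ᵥ y = ∑ i, B.repr (WithLp.toLp 2 x) i * B.repr (WithLp.toLp 2 y) i := by
    intro x y
    have h := B.repr.inner_map_map (WithLp.toLp 2 x) (WithLp.toLp 2 y)
    have h1 := inner_eq_dot (WithLp.toLp 2 x) (WithLp.toLp 2 y)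
    have h2 := inner_eq_dot (B.repr (WithLp.toLp 2 x)) (B.repr (WithLp.toLp 2 y))
    rw [h, h1] at h2
    rw [h2]
    rfl
  by_contra hcon
  push_neg at hcon
  set σ := Tuple.sort lam with hσ
  have hmono : Monotone (lam ∘ σ) := Tuple.monotone_sort lam
  have hse : sortedEigs A hA ⟨1, h1N⟩ = lam (σ ⟨1, h1N⟩) := rfl
  have huniq : ∀ i j : Fin N, lam i ≤ c → lam j ≤ c → i = j := by
    intro i j hi hj
    by_contra hij
    have hne : σ.symm i ≠ σ.symm j := fun h => hij (by
      have := congrArg σ h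
      rwa [Equiv.apply_symm_apply, Equiv.apply_symm_apply] at this)
    have key : ∀ k : Fin N, (1 : ℕ) ≤ k.val → sortedEigs A hA ⟨1, h1N⟩ ≤ lam (σ k) := by
      intro k hk1
      exact hmono (show (⟨1, h1N⟩ : Fin N) ≤ k from hk1)
    have hk : (1 : ℕ) ≤ (σ.symm i).val ∨ (1 : ℕ) ≤ (σ.symm j).val := by
      by_contra h
      push_neg at h
      exact hne (Fin.ext (by omega))
    rcases hk with hk | hk
    · have h2 := key _ hk
      rw [Equiv.apply_symm_apply] at h2
      exact absurd (h2.trans hi) (not_le.2 hcon)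
    · have h2 := key _ hk
      rw [Equiv.apply_symm_apply] at h2
      exact absurd (h2.trans hj) (not_le.2 hcon)
  have hw2pos : 0 < w ⬝ᵥ w := by
    obtain ⟨i, hi⟩ := Function.ne_iff.1 hwne
    have hi' : w i ≠ 0 := hi
    exact Finset.sum_pos' (fun i _ => mul_self_nonneg _)
      ⟨i, Finset.mem_univ i, mul_self_pos.2 hi'⟩
  have hAw0 : 0 ≤ w ⬝ᵥ (A *ᵥ w) := by
    have := hPSD.dotProduct_mulVec_nonneg w
    simpa using this
  have hc0 : 0 ≤ c := by nlinarith
  have hreprv : ∀ i, lam i * B.repr (WithLp.toLp 2 v) i = 0 := by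
    intro i
    have h := hAx v i
    rw [hv] at h
    have h0 : B.repr (WithLp.toLp 2 (0 : Fin N → ℝ)) i = 0 := by
      have : WithLp.toLp 2 (0 : Fin N → ℝ) = 0 := rfl
      rw [this, map_zero]
      rfl
    rw [h0] at h
    exact h.symm
  obtain ⟨i0, hi0⟩ : ∃ i, B.repr (WithLp.toLp 2 v) i ≠ 0 := by
    by_contra h
    push_neg at h
    apply hvne
    have hz : B.repr (WithLp.toLp 2 v) = 0 := by
      ext i
      exact h i
    have := B.repr.map_eq_zero_iff.1 hz
    exact congrArg WithLp.ofLp this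
  have hlam_i0 : lam i0 = 0 := by
    rcases mul_eq_zero.1 (hreprv i0) with h | h
    · exact h
    · exact absurd h hi0
  have hbig : ∀ i, i ≠ i0 → c < lam i := by
    intro i hi
    by_contra h
    push_neg at h
    exact hi (huniq i i0 h (by rw [hlam_i0]; exact hc0))
  have hcv : ∀ i, i ≠ i0 → B.repr (WithLp.toLp 2 v) i = 0 := by
    intro i hi
    have hlne : lam i ≠ 0 := ne_of_gt (lt_of_le_of_lt hc0 (hbig i hi))
    rcases mul_eq_zero.1 (hreprv i) with h | h
    · exact absurd h hlne
    · exact h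
  have hd0 : B.repr (WithLp.toLp 2 w) i0 = 0 := by
    have hsum := hdot v w
    rw [horth] at hsum
    rw [Finset.sum_eq_single i0
      (fun b _ hb => by rw [hcv b hb, zero_mul])
      (fun h => absurd (Finset.mem_univ i0) h)] at hsum
    rcases mul_eq_zero.1 hsum.symm with h | h
    · exact absurd h hi0
    · exact h
  obtain ⟨i1, hi1⟩ : ∃ i, B.repr (WithLp.toLp 2 w) i ≠ 0 := by
    by_contra h
    push_neg at h
    apply hwne
    have hz : B.repr (WithLp.toLp 2 w) = 0 := by
      ext i
      exact h i
    exact congrArg WithLp.ofLp (B.repr.map_eq_zero_iff.1 hz)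
  have hi1ne : i1 ≠ i0 := by
    intro h
    rw [h, hd0] at hi1
    exact hi1 rfl
  have hqL : w ⬝ᵥ (A *ᵥ w) = ∑ i, lam i * (B.repr (WithLp.toLp 2 w) i) ^ 2 := by
    rw [hdot w (A *ᵥ w)]
    apply Finset.sum_congr rfl
    intro i _
    rw [hAx]
    ring
  have hqR : w ⬝ᵥ w = ∑ i, (B.repr (WithLp.toLp 2 w) i) ^ 2 := by
    rw [hdot]
    apply Finset.sum_congr rfl
    intro i _
    ring
  have hlt : c * (w ⬝ᵥ w) < w ⬝ᵥ (A *ᵥ w) := by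
    rw [hqL, hqR, Finset.mul_sum]
    apply Finset.sum_lt_sum
    · intro i _
      by_cases h : i = i0
      · rw [h, hd0]
        simp
      · exact mul_le_mul_of_nonneg_right (le_of_lt (hbig i h)) (sq_nonneg _)
    · exact ⟨i1, Finset.mem_univ _,
        mul_lt_mul_of_pos_right (hbig i1 hi1ne) (by positivity)⟩
  exact absurd hq (not_le.2 hlt)

noncomputable def Fv (t : ℕ) : ℝ := if t / 2 ^ (Nat.log2 t - 1) = 2 then 1 else -1

lemma fsign_eq_Fv (s : ℕ) (hs : s ≠ 0) : fsign s = Fv (s + 1) := by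
  rw [fsign, if_neg hs]; rfl

lemma log2_eq {k t : ℕ} (h1 : 2 ^ k ≤ t) (h2 : t < 2 ^ (k + 1)) : Nat.log2 t = k := by
  rw [Nat.log2_eq_log_two]
  exact Nat.log_eq_of_pow_le_of_lt_pow h1 h2

lemma fsign_zero : fsign 0 = 0 := by simp [fsign]

lemma fsign_one : fsign 1 = 1 := by
  have h : Nat.log2 2 = 1 := log2_eq (by norm_num) (by norm_num)
  norm_num [fsign, h]

lemma fsign_two : fsign 2 = -1 := by
  have h : Nat.log2 3 = 1 := log2_eq (by norm_num) (by norm_num)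
  norm_num [fsign, h]

lemma fsign_child (s : ℕ) (hs : 1 ≤ s) :
    fsign (2 * s + 1) = fsign s ∧ fsign (2 * s + 2) = fsign s := by
  have ht2 : 2 ≤ s + 1 := by omega
  have hk1 : 1 ≤ Nat.log2 (s + 1) := by
    rw [Nat.log2_eq_log_two]
    exact Nat.log_pos one_lt_two ht2
  set k := Nat.log2 (s + 1) with hkdef
  have hl : 2 ^ k ≤ s + 1 := by
    rw [hkdef, Nat.log2_eq_log_two]
    exact Nat.pow_log_le_self 2 (by omega)
  have hr : s + 1 < 2 ^ (k + 1) := by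
    rw [hkdef, Nat.log2_eq_log_two]
    exact Nat.lt_pow_succ_log_self one_lt_two _
  have hpow : 2 ^ k = 2 * 2 ^ (k - 1) := by
    conv_lhs => rw [show k = (k - 1) + 1 by omega]
    rw [pow_succ]; ring
  have hlog2t : Nat.log2 (2 * (s + 1)) = k + 1 :=
    log2_eq (by rw [pow_succ]; omega) (by rw [pow_succ, pow_succ]; omega)
  have hlog2t1 : Nat.log2 (2 * (s + 1) + 1) = k + 1 :=
    log2_eq (by rw [pow_succ]; omega) (by rw [pow_succ, pow_succ]; omega)
  have hq1 : 2 * (s + 1) / 2 ^ k = (s + 1) / 2 ^ (k - 1) := by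
    rw [hpow, ← Nat.div_div_eq_div_mul, Nat.mul_div_cancel_left _ (by norm_num)]
  have hq2 : (2 * (s + 1) + 1) / 2 ^ k = (s + 1) / 2 ^ (k - 1) := by
    rw [hpow, ← Nat.div_div_eq_div_mul]
    congr 1
    omega
  constructor
  · rw [fsign_eq_Fv _ (by omega), fsign_eq_Fv _ (by omega : s ≠ 0), Fv, Fv]
    have h : 2 * s + 1 + 1 = 2 * (s + 1) := by ring
    rw [h, hlog2t, Nat.add_sub_cancel, hq1]
  · rw [fsign_eq_Fv _ (by omega), fsign_eq_Fv _ (by omega : s ≠ 0), Fv, Fv]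
    have h : 2 * s + 2 + 1 = 2 * (s + 1) + 1 := by ring
    rw [h, hlog2t1, Nat.add_sub_cancel, hq2]

lemma level_sum (k : ℕ) (hk : 1 ≤ k) :
    ∑ t ∈ Finset.Ico (2 ^ k) (2 ^ (k + 1)), Fv t = 0 := by
  have ha : 1 ≤ 2 ^ (k - 1) := Nat.one_le_two_pow
  have hpow : 2 ^ k = 2 * 2 ^ (k - 1) := by
    conv_lhs => rw [show k = (k - 1) + 1 by omega]
    rw [pow_succ]; ring
  have hpow2 : 2 ^ (k + 1) = 4 * 2 ^ (k - 1) := by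
    rw [pow_succ, hpow]; ring
  have hmid1 : 2 ^ k ≤ 2 ^ k + 2 ^ (k - 1) := Nat.le_add_right _ _
  have hmid2 : 2 ^ k + 2 ^ (k - 1) ≤ 2 ^ (k + 1) := by omega
  rw [← Finset.sum_Ico_consecutive Fv hmid1 hmid2]
  have h1 : ∀ t ∈ Finset.Ico (2 ^ k) (2 ^ k + 2 ^ (k - 1)), Fv t = 1 := by
    intro t ht
    rw [Finset.mem_Ico] at ht
    have hlog : Nat.log2 t = k := log2_eq ht.1 (by omega)
    rw [Fv, hlog, if_pos]
    exact Nat.div_eq_of_lt_le (by omega) (by omega)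
  have h2 : ∀ t ∈ Finset.Ico (2 ^ k + 2 ^ (k - 1)) (2 ^ (k + 1)), Fv t = -1 := by
    intro t ht
    rw [Finset.mem_Ico] at ht
    have hlog : Nat.log2 t = k := log2_eq (by omega) (by omega)
    rw [Fv, hlog, if_neg]
    have : t / 2 ^ (k - 1) = 3 := Nat.div_eq_of_lt_le (by omega) (by omega)
    omega
  rw [Finset.sum_congr rfl h1, Finset.sum_congr rfl h2, Finset.sum_const, Finset.sum_const,
    Nat.card_Ico, Nat.card_Ico]
  have c1 : 2 ^ k + 2 ^ (k - 1) - 2 ^ k = 2 ^ (k - 1) := by omega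
  have c2 : 2 ^ (k + 1) - (2 ^ k + 2 ^ (k - 1)) = 2 ^ (k - 1) := by omega
  rw [c1, c2]
  simp [nsmul_eq_mul]

lemma sum_Fv (d : ℕ) : ∑ t ∈ Finset.Ico 2 (2 ^ d), Fv t = 0 := by
  induction d with
  | zero => simp
  | succ d ih =>
    rcases Nat.eq_zero_or_pos d with rfl | hd
    · simp
    · have h2 : 2 ≤ 2 ^ d := by
        calc 2 = 2 ^ 1 := by norm_num
        _ ≤ 2 ^ d := Nat.pow_le_pow_right (by norm_num) hd
      rw [← Finset.sum_Ico_consecutive Fv h2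
        (Nat.pow_le_pow_right (by norm_num) (Nat.le_succ d)), ih, level_sum d hd, zero_add]

lemma sum_fsign {n d : ℕ} (hd : 1 ≤ d) (hn : n + 1 = 2 ^ d) :
    ∑ s ∈ Finset.range n, fsign s = 0 := by
  have hn1 : 1 ≤ n := by
    have : 2 ≤ 2 ^ d := by
      calc 2 = 2 ^ 1 := by norm_num
      _ ≤ 2 ^ d := Nat.pow_le_pow_right (by norm_num) hd
    omega
  rw [Finset.range_eq_Ico, ← Finset.sum_Ico_consecutive fsign (Nat.zero_le 1) hn1]
  have h0 : ∑ s ∈ Finset.Ico 0 1, fsign s = 0 := by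
    simp [fsign_zero]
  rw [h0, zero_add]
  have e1 : ∑ s ∈ Finset.Ico 1 n, fsign s = ∑ i ∈ Finset.range (n - 1), fsign (1 + i) :=
    Finset.sum_Ico_eq_sum_range _ _ _
  have e2 : ∑ t ∈ Finset.Ico 2 (2 ^ d), Fv t = ∑ i ∈ Finset.range (2 ^ d - 2), Fv (2 + i) :=
    Finset.sum_Ico_eq_sum_range _ _ _
  have hcard : n - 1 = 2 ^ d - 2 := by omega
  rw [e1, hcard]
  have e3 : ∀ i ∈ Finset.range (2 ^ d - 2), fsign (1 + i) = Fv (2 + i) := by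
    intro i _
    rw [fsign_eq_Fv _ (by omega)]
    congr 1
    omega
  rw [Finset.sum_congr rfl e3, ← e2, sum_Fv]

lemma fsign_sq (s : ℕ) : (fsign s) ^ 2 = if s = 0 then 0 else 1 := by
  rw [fsign]
  split_ifs <;> norm_num

lemma sum_fsign_sq (n : ℕ) (hn : 1 ≤ n) :
    ∑ s ∈ Finset.range n, (fsign s) ^ 2 = (n : ℝ) - 1 := by
  simp only [fsign_sq]
  have h : ∀ s, (if s = 0 then (0 : ℝ) else 1) = 1 - (if s = 0 then 1 else 0) := by
    intro s; split_ifs <;> ring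
  simp_rw [h]
  rw [Finset.sum_sub_distrib, Finset.sum_const,
    Finset.sum_ite_eq' (Finset.range n) 0 (fun _ => (1 : ℝ))]
  have : ¬ n = 0 := by omega
  simp [Finset.mem_range, hn, nsmul_eq_mul, this]

lemma sum_mod_fin (n l : ℕ) (g : ℕ → ℝ) :
    ∑ i : Fin (n * l), g (i.val % n) = l * ∑ s ∈ Finset.range n, g s := by
  rw [Fin.sum_univ_eq_sum_range (fun j => g (j % n)) (n * l)]
  induction l with
  | zero => simp
  | succ l ih =>
    have h1 : n * (l + 1) = n * l + n := by ring
    rw [h1, Finset.range_eq_Ico,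
      ← Finset.sum_Ico_consecutive _ (Nat.zero_le (n * l)) (Nat.le_add_right (n * l) n),
      ← Finset.range_eq_Ico, ih]
    have e1 : ∑ i ∈ Finset.Ico (n * l) (n * l + n), g (i % n)
        = ∑ i ∈ Finset.range (n * l + n - n * l), g ((n * l + i) % n) :=
      Finset.sum_Ico_eq_sum_range _ _ _
    have hc : n * l + n - n * l = n := by omega
    rw [e1, hc]
    have e2 : ∀ i ∈ Finset.range n, g ((n * l + i) % n) = g i := by
      intro i hi
      congr 1
      rw [Nat.add_comm, Nat.add_mul_mod_self_left]
      exact Nat.mod_eq_of_lt (Finset.mem_range.1 hi)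
    rw [Finset.sum_congr rfl e2]
    push_cast
    ring

lemma sum_val_eq (M m : ℕ) :
    ∑ j : Fin M, (if (j : ℕ) = m then (1 : ℝ) else 0) = if m < M then 1 else 0 := by
  rw [Fin.sum_univ_eq_sum_range (fun j => if j = m then (1 : ℝ) else 0) M]
  rw [Finset.sum_ite_eq' (Finset.range M) m (fun _ => (1 : ℝ))]
  simp [Finset.mem_range]

lemma treeChain_pat_adj {n l : ℕ} (hn : 3 ≤ n) (i j : Fin (n * l))
    (hp : i.val % n = 0 ∧ (j.val = i.val + 1 ∨ j.val = i.val + 2)) :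
    (treeChain n l).Adj i j := by
  obtain ⟨h0, hb⟩ := hp
  rw [treeChain, SimpleGraph.fromRel_adj]
  have hil := i.isLt
  have hjl := j.isLt
  constructor
  · intro h
    have : i.val = j.val := congrArg Fin.val h
    omega
  · left; left
    have hid : n * (i.val / n) = i.val := Nat.mul_div_cancel' (Nat.dvd_of_mod_eq_zero h0)
    refine ⟨i.val / n, ?_, ?_, ?_, ?_, ?_, ?_⟩
    · by_contra hc
      push_neg at hc
      have h2 : n * l ≤ n * (i.val / n) := Nat.mul_le_mul_left n hc
      rw [hid] at h2
      omega
    · rw [hid]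
    · rw [hid]; omega
    · rw [hid]; omega
    · rw [hid]; omega
    · rw [hid]; omega

lemma treeChain_rel_cases {n l : ℕ} (hn : 3 ≤ n) (a b : Fin (n * l))
    (hrel : (∃ q, q < l ∧ n * q ≤ a.val ∧ a.val < n * q + n ∧ n * q ≤ b.val ∧ b.val < n * q + n ∧
      (b.val - n * q = 2 * (a.val - n * q) + 1 ∨ b.val - n * q = 2 * (a.val - n * q) + 2)) ∨
    (∃ q, q + 1 < l ∧ a.val = n * q ∧ b.val = n * (q + 1))) :
    ((a.val % n = 0 ∧ (b.val = a.val + 1 ∨ b.val = a.val + 2))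
       ∧ (fsign (a.val % n) - fsign (b.val % n)) ^ 2 = 1 ∧ b.val % n ≠ 0)
    ∨ (fsign (a.val % n) = fsign (b.val % n)
       ∧ ¬(a.val % n = 0 ∧ (b.val = a.val + 1 ∨ b.val = a.val + 2))
       ∧ ¬(b.val % n = 0 ∧ (a.val = b.val + 1 ∨ a.val = b.val + 2))) := by
  rcases hrel with ⟨q, hql, h1, h2, h3, h4, h5⟩ | ⟨q, hql, ha, hb⟩
  · obtain ⟨m, hm⟩ : ∃ m, n * q = m := ⟨_, rfl⟩
    rw [hm] at h1 h2 h3 h4 h5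
    have hamod : a.val % n = a.val - m := by
      calc a.val % n = (n * q + (a.val - m)) % n := by rw [hm]; congr 1; omega
      _ = (a.val - m) % n := Nat.mul_add_mod n q _
      _ = a.val - m := Nat.mod_eq_of_lt (by omega)
    have hbmod : b.val % n = b.val - m := by
      calc b.val % n = (n * q + (b.val - m)) % n := by rw [hm]; congr 1; omega
      _ = (b.val - m) % n := Nat.mul_add_mod n q _
      _ = b.val - m := Nat.mod_eq_of_lt (by omega)
    by_cases hs0 : a.val - m = 0
    · left
      refine ⟨⟨by omega, by omega⟩, ?_, by omega⟩
      have hA : fsign (a.val % n) = 0 := by rw [hamod, hs0, fsign_zero]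
      rcases h5 with h5 | h5
      · have hB : fsign (b.val % n) = 1 := by
          rw [hbmod, show b.val - m = 1 by omega, fsign_one]
        rw [hA, hB]; norm_num
      · have hB : fsign (b.val % n) = -1 := by
          rw [hbmod, show b.val - m = 2 by omega, fsign_two]
        rw [hA, hB]; norm_num
    · right
      have hs1 : 1 ≤ a.val - m := by omega
      refine ⟨?_, by omega, by omega⟩
      rcases h5 with h5 | h5
      · rw [hamod, hbmod, show b.val - m = 2 * (a.val - m) + 1 by omega]
        exact ((fsign_child _ hs1).1).symm ▸ rfl
      · rw [hamod, hbmod, show b.val - m = 2 * (a.val - m) + 2 by omega]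
        exact ((fsign_child _ hs1).2).symm ▸ rfl
  · obtain ⟨m, hm⟩ : ∃ m, n * q = m := ⟨_, rfl⟩
    have hb' : b.val = m + n := by
      rw [← hm, hb]; ring
    rw [hm] at ha
    have hamod : a.val % n = 0 := by rw [ha, ← hm, Nat.mul_mod_right]
    have hbmod : b.val % n = 0 := by
      rw [hb, Nat.mul_mod_right]
    right
    refine ⟨by rw [hamod, hbmod], by omega, by omega⟩

lemma treeChain_pointwise {n l : ℕ} [DecidableRel (treeChain n l).Adj]
    (hn : 3 ≤ n) (i j : Fin (n * l)) :
    (if (treeChain n l).Adj i j then (fsign (i.val % n) - fsign (j.val % n)) ^ 2 else 0)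
      = aij n i.val j.val + aij n j.val i.val := by
  by_cases hadj : (treeChain n l).Adj i j
  · rw [if_pos hadj]
    rw [treeChain, SimpleGraph.fromRel_adj] at hadj
    obtain ⟨hne, hrel⟩ := hadj
    rcases hrel with h | h
    · rcases treeChain_rel_cases hn i j h with ⟨hp, hval, hbn⟩ | ⟨hveq, hnp1, hnp2⟩
      · rw [hval, aij, if_pos hp, aij, if_neg (by rintro ⟨hb0, _⟩; exact hbn hb0)]
        norm_num
      · rw [hveq, aij, if_neg hnp1, aij, if_neg hnp2]
        ring
    · rcases treeChain_rel_cases hn j i h with ⟨hp, hval, hbn⟩ | ⟨hveq, hnp1, hnp2⟩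
      · have hval' : (fsign (i.val % n) - fsign (j.val % n)) ^ 2 = 1 := by
          rw [show (fsign (i.val % n) - fsign (j.val % n)) ^ 2
            = (fsign (j.val % n) - fsign (i.val % n)) ^ 2 by ring, hval]
        rw [hval', aij, if_neg (by rintro ⟨hb0, _⟩; exact hbn hb0), aij, if_pos hp]
        norm_num
      · rw [hveq.symm, aij, if_neg hnp2, aij, if_neg hnp1]
        ring
  · rw [if_neg hadj, aij, aij,
      if_neg (fun hp => hadj (treeChain_pat_adj hn i j hp)),
      if_neg (fun hp => hadj ((treeChain_pat_adj hn j i hp).symm))]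
    ring

lemma sum_aij {n l : ℕ} (hn : 3 ≤ n) :
    ∑ i : Fin (n * l), ∑ j : Fin (n * l), aij n i.val j.val = 2 * l := by
  have inner : ∀ i : Fin (n * l), ∑ j : Fin (n * l), aij n i.val j.val
      = (fun s => if s = 0 then (2 : ℝ) else 0) (i.val % n) := by
    intro i
    by_cases h0 : i.val % n = 0
    · simp only [h0, if_pos]
      have hsplit : ∀ j : Fin (n * l), aij n i.val j.val
          = (if (j : ℕ) = i.val + 1 then (1 : ℝ) else 0)
            + (if (j : ℕ) = i.val + 2 then (1 : ℝ) else 0) := by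
        intro j
        simp only [aij, h0, true_and]
        by_cases ha : (j : ℕ) = i.val + 1
        · rw [if_pos (Or.inl ha), if_pos ha, if_neg (by omega), add_zero]
        · by_cases hb : (j : ℕ) = i.val + 2
          · rw [if_pos (Or.inr hb), if_neg ha, if_pos hb, zero_add]
          · rw [if_neg (by tauto), if_neg ha, if_neg hb, add_zero]
      rw [Finset.sum_congr rfl (fun j _ => hsplit j), Finset.sum_add_distrib,
        sum_val_eq, sum_val_eq]
      have hi2 : i.val + 2 < n * l := by
        obtain ⟨q, hq⟩ := Nat.dvd_of_mod_eq_zero h0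
        have hil := i.isLt
        have hql : q < l := by
          by_contra hc
          push_neg at hc
          have h2 : n * l ≤ n * q := Nat.mul_le_mul_left n hc
          omega
        have h3 : n * (q + 1) ≤ n * l := Nat.mul_le_mul_left n hql
        have h4 : n * (q + 1) = n * q + n := by ring
        omega
      rw [if_pos (by omega), if_pos hi2]
      norm_num
    · simp only [if_neg h0]
      apply Finset.sum_eq_zero
      intro j _
      simp only [aij]
      rw [if_neg]
      rintro ⟨hp, _⟩
      exact h0 hp
  rw [Finset.sum_congr rfl (fun i _ => inner i),
    sum_mod_fin n l (fun s => if s = 0 then (2 : ℝ) else 0),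
    Finset.sum_ite_eq' (Finset.range n) 0 (fun _ => (2 : ℝ))]
  rw [if_pos (Finset.mem_range.2 (by omega))]
  ring

/-- Upper bound for the second Laplacian eigenvalue of a chain of `l` full binary trees:
`λ₂(T_{n×l}^2) ≤ 2/(n-1)`. -/
theorem treeChain_lambda2_upper (n l : ℕ) (hfull : ∃ d : ℕ, 2 ≤ d ∧ n + 1 = 2 ^ d)
    (hl : 2 ≤ l) :
    lambda2 (treeChain n l) ≤ 2 / ((n : ℝ) - 1) := by
  obtain ⟨d, hd2, hnd⟩ := hfull
  have hn3 : 3 ≤ n := by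
    have h4 : (4 : ℕ) ≤ 2 ^ d := by
      calc (4 : ℕ) = 2 ^ 2 := by norm_num
      _ ≤ 2 ^ d := Nat.pow_le_pow_right (by norm_num) hd2
    omega
  have h1N : 1 < n * l := by
    have := Nat.mul_le_mul hn3 hl
    omega
  letI : DecidableRel (treeChain n l).Adj := Classical.decRel _
  set w : Fin (n * l) → ℝ := fun i => fsign (i.val % n) with hw
  have hvne : (fun _ : Fin (n * l) => (1 : ℝ)) ≠ 0 := by
    intro h
    have := congrFun h ⟨0, by omega⟩
    norm_num at this
  have hwne : w ≠ 0 := by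
    intro h
    have h1 := congrFun h ⟨1, h1N⟩
    rw [hw] at h1
    simp only at h1
    rw [Nat.mod_eq_of_lt (by omega), fsign_one] at h1
    norm_num at h1
  have horth : (fun _ : Fin (n * l) => (1 : ℝ)) ⬝ᵥ w = 0 := by
    simp only [dotProduct, one_mul, hw]
    rw [sum_mod_fin n l fsign, sum_fsign (by omega) hnd, mul_zero]
  have hv : (treeChain n l).lapMatrix ℝ *ᵥ (fun _ => (1 : ℝ)) = 0 :=
    (treeChain n l).lapMatrix_mulVec_const_eq_zero
  have hww : w ⬝ᵥ w = l * ((n : ℝ) - 1) := by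
    simp only [dotProduct, hw]
    have h : ∀ i : Fin (n * l), fsign (i.val % n) * fsign (i.val % n)
        = (fun s => (fsign s) ^ 2) (i.val % n) := by
      intro i; simp; ring
    rw [Finset.sum_congr rfl (fun i _ => h i), sum_mod_fin n l (fun s => (fsign s) ^ 2),
      sum_fsign_sq n (by omega)]
  have hwLw : w ⬝ᵥ ((treeChain n l).lapMatrix ℝ *ᵥ w) = 2 * l := by
    rw [← Matrix.toLinearMap₂'_apply', (treeChain n l).lapMatrix_toLinearMap₂' ℝ w]
    have hpt : ∀ i : Fin (n * l), ∀ j : Fin (n * l),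
        (if (treeChain n l).Adj i j then (w i - w j) ^ 2 else 0)
        = aij n i.val j.val + aij n j.val i.val := fun i j => treeChain_pointwise hn3 i j
    rw [Finset.sum_congr rfl (fun i _ => Finset.sum_congr rfl (fun j _ => hpt i j))]
    have hsplit : ∑ i : Fin (n * l), ∑ j : Fin (n * l),
          (aij n i.val j.val + aij n j.val i.val)
        = (∑ i : Fin (n * l), ∑ j : Fin (n * l), aij n i.val j.val)
          + ∑ i : Fin (n * l), ∑ j : Fin (n * l), aij n j.val i.val := by
      rw [← Finset.sum_add_distrib]
      exact Finset.sum_congr rfl fun i _ => Finset.sum_add_distrib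
    have hcomm : (∑ i : Fin (n * l), ∑ j : Fin (n * l), aij n j.val i.val)
        = ∑ i : Fin (n * l), ∑ j : Fin (n * l), aij n i.val j.val := Finset.sum_comm
    rw [hsplit, hcomm, sum_aij hn3]
    ring
  have hq : w ⬝ᵥ ((treeChain n l).lapMatrix ℝ *ᵥ w)
      ≤ (2 / ((n : ℝ) - 1)) * (w ⬝ᵥ w) := by
    rw [hwLw, hww]
    have hne : (n : ℝ) - 1 ≠ 0 := by
      have h3 : (3 : ℝ) ≤ (n : ℝ) := by exact_mod_cast hn3
      intro h; rw [sub_eq_zero] at h; rw [h] at h3; norm_num at h3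
    have : (2 / ((n : ℝ) - 1)) * ((l : ℝ) * ((n : ℝ) - 1)) = 2 * l := by
      field_simp
    rw [this]
  rw [lambda2, dif_pos h1N]
  exact second_eig_le ((treeChain n l).lapMatrix ℝ)
    ((treeChain n l).posSemidef_lapMatrix ℝ).1
    ((treeChain n l).posSemidef_lapMatrix ℝ)
    (fun _ => (1 : ℝ)) w (2 / ((n : ℝ) - 1)) hv hvne hwne horth hq h1N
end
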